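/- arXiv:2103.03983 — 6 statements merged into one kernel-verified Lean document; each statement's English description precedes it below -/
import Mathlib

section
/- Let V be a finite-dimensional complex vector space and N : V → V a nilpotent endomorphism. Then there exists a unique increasing filtration W_• of V (the monodromy filtration of N) satisfying: (1) N(W_ℓ) ⊆ W_{ℓ-2} for all ℓ ∈ ℤ, and (2) for every ℓ ≥ 0 the induced map N^ℓ : gr^W_ℓ V → gr^W_{-ℓ} V is an isomorphism. -/
/-- `W` is a monodromy filtration for the nilpotent endomorphism `N` : it is an
increasing, exhaustive and separated filtration such that `N (W ℓ) ⊆ W (ℓ - 2)` and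
the induced map `N ^ ℓ : gr^W_ℓ → gr^W_{-ℓ}` is an isomorphism for every `ℓ ≥ 0`
(injectivity and surjectivity of the induced map are expressed at the level of
representatives). -/
def IsMonodromyFiltration {V : Type*} [AddCommGroup V] [Module ℂ V]
    (N : V →ₗ[ℂ] V) (W : ℤ → Submodule ℂ V) : Prop :=
  Monotone W ∧ (∃ a : ℤ, W a = ⊥) ∧ (∃ b : ℤ, W b = ⊤) ∧
  (∀ ℓ : ℤ, (W ℓ).map N ≤ W (ℓ - 2)) ∧
  (∀ ℓ : ℕ,
    (∀ x ∈ W (ℓ : ℤ), (N ^ ℓ) x ∈ W (-(ℓ : ℤ) - 1) → x ∈ W ((ℓ : ℤ) - 1)) ∧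
    (∀ y ∈ W (-(ℓ : ℤ)), ∃ x ∈ W (ℓ : ℤ), (N ^ ℓ) x - y ∈ W (-(ℓ : ℤ) - 1)))

/-!
Existence: `W ℓ = ∑_{j ≥ 0} N^j (ker N^(ℓ+2j+1))` works. For `ℓ ≤ n`, the summands of
`W (ℓ - 2n)` with `j ≥ n` are `N^n` of summands of `W ℓ` and the others vanish, so `N^n` maps
`W ℓ` onto `W (ℓ - 2n)`; together with `ker N^n ⊆ W (n - 1)` this gives the isomorphisms
`gr_n → gr_{-n}`.

Uniqueness: the two halves of condition (2) say that `W (n - 1) = W n ∩ (N^n)⁻¹ W (-n - 1)` and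
`W (-n) = N^n (W n) + W (-n - 1)`, so `(W n, W (-n - 1))` determines `(W (n - 1), W (-n))`.
Once `N^n = 0` these identities make `W` constant above `n - 1` and below `-n`, hence equal to
`V` and `0` there, and a descending induction on `n` finishes.
-/

section Construction

variable {R M : Type*} [Semiring R] [AddCommMonoid M] [Module R M] (N : Module.End R M)

lemma Module.End.map_pow_ker_pow_eq_bot {t j : ℕ} (h : t ≤ j) :
    (LinearMap.ker (N ^ t)).map (N ^ j) = ⊥ := by
  rw [eq_bot_iff]
  rintro - ⟨x, hx, rfl⟩
  exact Module.End.pow_map_zero_of_le h hx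

/-- For `ℓ + 2j + 1 ≤ 0` the exponent `Int.toNat` truncates to `0`, and `ker N^0 = ⊥`. -/
noncomputable def monodromyFiltration (ℓ : ℤ) : Submodule R M :=
  ⨆ j : ℕ, (LinearMap.ker (N ^ (ℓ + 2 * j + 1).toNat)).map (N ^ j)

lemma map_pow_ker_le_monodromyFiltration (ℓ : ℤ) (j : ℕ) :
    (LinearMap.ker (N ^ (ℓ + 2 * j + 1).toNat)).map (N ^ j) ≤ monodromyFiltration N ℓ :=
  le_iSup (fun j : ℕ ↦ (LinearMap.ker (N ^ (ℓ + 2 * j + 1).toNat)).map (N ^ j)) j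

lemma monodromyFiltration_mono : Monotone (monodromyFiltration N) := fun _ _ h ↦
  iSup_mono fun _ ↦ Submodule.map_mono (N.iterateKer.monotone (Int.toNat_le_toNat (by omega)))

lemma ker_pow_le_monodromyFiltration (n : ℕ) :
    LinearMap.ker (N ^ n) ≤ monodromyFiltration N (n - 1) := by
  simpa [Module.End.one_eq_id] using map_pow_ker_le_monodromyFiltration N (n - 1) 0

lemma monodromyFiltration_eq_top {k : ℕ} (hk : N ^ k = 0) :
    monodromyFiltration N (k - 1) = ⊤ := by
  rw [eq_top_iff, ← LinearMap.ker_eq_top.2 hk]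
  exact ker_pow_le_monodromyFiltration N k

lemma monodromyFiltration_eq_bot {k : ℕ} (hk : N ^ k = 0) :
    monodromyFiltration N (-k) = ⊥ := by
  refine eq_bot_iff.2 (iSup_le fun j ↦ ?_)
  rcases lt_or_ge j k with hj | hj
  · rw [N.map_pow_ker_pow_eq_bot (by omega)]
  · rw [pow_eq_zero_of_le hj hk, Submodule.map_zero]

lemma map_monodromyFiltration_le (ℓ : ℤ) :
    (monodromyFiltration N ℓ).map N ≤ monodromyFiltration N (ℓ - 2) := by
  rw [monodromyFiltration, Submodule.map_iSup]
  refine iSup_le fun j ↦ ?_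
  rw [← Submodule.map_comp, ← Module.End.mul_eq_comp, ← pow_succ']
  convert map_pow_ker_le_monodromyFiltration N (ℓ - 2) (j + 1) using 5
  push_cast
  ring

lemma monodromyFiltration_le_map_pow {ℓ : ℤ} {n : ℕ} (h : ℓ ≤ n) :
    monodromyFiltration N (ℓ - 2 * n) ≤ (monodromyFiltration N ℓ).map (N ^ n) := by
  refine iSup_le fun j ↦ ?_
  rcases lt_or_ge j n with hj | hj
  · rw [N.map_pow_ker_pow_eq_bot (by omega)]
    exact bot_le
  · obtain ⟨i, rfl⟩ := Nat.exists_eq_add_of_le hj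
    rw [pow_add, Module.End.mul_eq_comp, Submodule.map_comp]
    refine Submodule.map_mono ?_
    convert map_pow_ker_le_monodromyFiltration N ℓ i using 5
    push_cast
    ring

end Construction

theorem isMonodromyFiltration_monodromyFiltration {V : Type*} [AddCommGroup V] [Module ℂ V]
    {N : V →ₗ[ℂ] V} (hN : IsNilpotent N) : IsMonodromyFiltration N (monodromyFiltration N) := by
  obtain ⟨k, hk⟩ := hN
  refine ⟨monodromyFiltration_mono N, ⟨-k, monodromyFiltration_eq_bot N hk⟩,
    ⟨k - 1, monodromyFiltration_eq_top N hk⟩, map_monodromyFiltration_le N, fun n ↦ ⟨?_, ?_⟩⟩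
  · intro x _ hx
    obtain ⟨w, hw, hwx⟩ := monodromyFiltration_le_map_pow N (ℓ := n - 1) (n := n) (by omega)
      (by convert hx using 2; ring)
    have hker : x - w ∈ LinearMap.ker (N ^ n) := by simp [hwx]
    simpa using add_mem (ker_pow_le_monodromyFiltration N n hker) hw
  · intro y hy
    obtain ⟨x, hx, rfl⟩ := monodromyFiltration_le_map_pow N (ℓ := n) (n := n) le_rfl
      (by convert hy using 2; ring)
    exact ⟨x, hx, by simp⟩

lemma map_pow_le_of_forall_map_le {R M : Type*} [Semiring R] [AddCommMonoid M] [Module R M]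
    {N : Module.End R M} {W : ℤ → Submodule R M} (h : ∀ ℓ, (W ℓ).map N ≤ W (ℓ - 2))
    (n : ℕ) (ℓ : ℤ) : (W ℓ).map (N ^ n) ≤ W (ℓ - 2 * n) := by
  induction n with
  | zero => simp [Module.End.one_eq_id]
  | succ n ih =>
    rw [pow_succ', Module.End.mul_eq_comp, Submodule.map_comp]
    calc ((W ℓ).map (N ^ n)).map N ≤ (W (ℓ - 2 * n)).map N := Submodule.map_mono ih
      _ ≤ W (ℓ - 2 * n - 2) := h _
      _ = W (ℓ - 2 * (n + 1 : ℕ)) := by push_cast; ring_nf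

namespace IsMonodromyFiltration

variable {V : Type*} [AddCommGroup V] [Module ℂ V] {N : V →ₗ[ℂ] V} {W W' : ℤ → Submodule ℂ V}

lemma eq_inf_comap (hW : IsMonodromyFiltration N W) (n : ℕ) :
    W (n - 1) = W n ⊓ (W (-n - 1)).comap (N ^ n) := by
  obtain ⟨hmono, -, -, hmap, hgr⟩ := hW
  refine le_antisymm (le_inf (hmono (by omega)) (Submodule.map_le_iff_le_comap.1 ?_)) ?_
  · convert map_pow_le_of_forall_map_le hmap n (n - 1) using 2
    ring
  · rintro x ⟨hx, hNx⟩
    exact (hgr n).1 x hx hNx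

lemma eq_map_sup (hW : IsMonodromyFiltration N W) (n : ℕ) :
    W (-n) = (W n).map (N ^ n) ⊔ W (-n - 1) := by
  obtain ⟨hmono, -, -, hmap, hgr⟩ := hW
  refine le_antisymm (fun y hy ↦ ?_) (sup_le ?_ (hmono (by omega)))
  · obtain ⟨x, hx, hxy⟩ := (hgr n).2 y hy
    rw [show y = (N ^ n) x - ((N ^ n) x - y) by abel]
    exact Submodule.sub_mem_sup ⟨x, hx, rfl⟩ hxy
  · convert map_pow_le_of_forall_map_le hmap n n using 2
    ring

lemma eq_top_of_pow_eq_zero (hW : IsMonodromyFiltration N W) {k : ℕ} (hk : N ^ k = 0)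
    {n : ℕ} (hn : k ≤ n) : W n = ⊤ := by
  have hconst : ∀ j : ℕ, W n = W (n + j) := by
    intro j
    induction j with
    | zero => simp
    | succ j ih =>
      have hstep := hW.eq_inf_comap (n + j + 1)
      rw [pow_eq_zero_of_le (by omega) hk, Submodule.comap_zero, inf_top_eq] at hstep
      rw [ih]
      convert hstep using 2 <;> push_cast <;> ring
  obtain ⟨hmono, -, ⟨b, hb⟩, -, -⟩ := hW
  rw [eq_top_iff, hconst (b - n).toNat, ← hb]
  exact hmono (by omega)

lemma eq_bot_of_pow_eq_zero (hW : IsMonodromyFiltration N W) {k : ℕ} (hk : N ^ k = 0)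
    {n : ℕ} (hn : k ≤ n) : W (-n) = ⊥ := by
  have hconst : ∀ j : ℕ, W (-n) = W (-n - j) := by
    intro j
    induction j with
    | zero => simp
    | succ j ih =>
      have hstep := hW.eq_map_sup (n + j)
      rw [pow_eq_zero_of_le (by omega) hk, Submodule.map_zero, bot_sup_eq] at hstep
      rw [ih]
      convert hstep using 2 <;> push_cast <;> ring
  obtain ⟨hmono, ⟨a, ha⟩, -, -, -⟩ := hW
  rw [eq_bot_iff, hconst (-n - a).toNat, ← ha]
  exact hmono (by omega)

lemma eq_sub_one_and_eq_neg_of_eq (hW : IsMonodromyFiltration N W)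
    (hW' : IsMonodromyFiltration N W') {n : ℕ} (hpos : W n = W' n)
    (hneg : W (-n - 1) = W' (-n - 1)) : W (n - 1) = W' (n - 1) ∧ W (-n) = W' (-n) :=
  ⟨by rw [hW.eq_inf_comap, hW'.eq_inf_comap, hpos, hneg],
    by rw [hW.eq_map_sup, hW'.eq_map_sup, hpos, hneg]⟩

theorem unique (hN : IsNilpotent N) (hW : IsMonodromyFiltration N W)
    (hW' : IsMonodromyFiltration N W') : W = W' := by
  obtain ⟨k, hk⟩ := hN
  have descend : ∀ d n : ℕ, k ≤ n + d → W n = W' n ∧ W (-n - 1) = W' (-n - 1) := by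
    intro d
    induction d with
    | zero =>
      intro n (hn : k ≤ n)
      have hbot := hW.eq_bot_of_pow_eq_zero hk (n := n + 1) (by omega)
      have hbot' := hW'.eq_bot_of_pow_eq_zero hk (n := n + 1) (by omega)
      push_cast at hbot hbot'
      rw [neg_add'] at hbot hbot'
      rw [hW.eq_top_of_pow_eq_zero hk hn, hW'.eq_top_of_pow_eq_zero hk hn, hbot, hbot']
      exact ⟨rfl, rfl⟩
    | succ d ih =>
      intro n hn
      obtain ⟨hpos, hneg⟩ := ih (n + 1) (by omega)
      have := hW.eq_sub_one_and_eq_neg_of_eq hW' hpos hneg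
      push_cast at this
      simpa only [add_sub_cancel_right, neg_add'] using this
  funext ℓ
  cases ℓ with
  | ofNat n => exact (descend k n (by omega)).1
  | negSucc n =>
    rw [Int.negSucc_eq, neg_add']
    exact (descend k n (by omega)).2

end IsMonodromyFiltration

theorem monodromy_filtration_existsUnique_general
    (V : Type*) [AddCommGroup V] [Module ℂ V]
    (N : V →ₗ[ℂ] V) (hN : IsNilpotent N) :
    ∃! W : ℤ → Submodule ℂ V, IsMonodromyFiltration N W :=
  ⟨monodromyFiltration N, isMonodromyFiltration_monodromyFiltration hN,
    fun _ hW ↦ hW.unique hN (isMonodromyFiltration_monodromyFiltration hN)⟩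

/-- Existence and uniqueness of the monodromy filtration of a nilpotent
endomorphism of a finite-dimensional complex vector space. -/
theorem monodromy_filtration_existsUnique
    (V : Type*) [AddCommGroup V] [Module ℂ V] [FiniteDimensional ℂ V]
    (N : V →ₗ[ℂ] V) (hN : IsNilpotent N) :
    ∃! W : ℤ → Submodule ℂ V, IsMonodromyFiltration N W :=
  monodromy_filtration_existsUnique_general V N hN
end

section
/- Let V be a finite-dimensional complex vector space, N a nilpotent endomorphism, and W_• its monodromy filtration. For ℓ ≥ 0, the primitive part P_ℓ := ker(N^{ℓ+1} : gr^W_ℓ → gr^W_{-ℓ-2}) is canonically isomorphic to the quotient ker(N^{ℓ+1}) / (ker(N^ℓ) + im(N) ∩ ker(N^{ℓ+1})). -/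
open Filter

namespace IsMonodromyFiltration

variable {V : Type*} [AddCommGroup V] [Module ℂ V] {N : V →ₗ[ℂ] V} {W : ℤ → Submodule ℂ V}

protected theorem monotone (hW : IsMonodromyFiltration N W) : Monotone W := hW.1

theorem map_le (hW : IsMonodromyFiltration N W) (ℓ : ℤ) : (W ℓ).map N ≤ W (ℓ - 2) := hW.2.2.2.1 ℓ

theorem map_pow_le (hW : IsMonodromyFiltration N W) (j : ℕ) (t : ℤ) :
    (W t).map (N ^ j) ≤ W (t - 2 * j) := by
  induction j with
  | zero => simp [Module.End.one_eq_id]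
  | succ j ih =>
    rw [pow_succ', Module.End.mul_eq_comp, Submodule.map_comp]
    calc ((W t).map (N ^ j)).map N ≤ (W (t - 2 * j)).map N := Submodule.map_mono ih
      _ ≤ W (t - 2 * j - 2) := hW.map_le _
      _ = W (t - 2 * ↑(j + 1)) := by push_cast; ring_nf

theorem ker_pow_le (hW : IsMonodromyFiltration N W) (k : ℕ) :
    LinearMap.ker (N ^ k) ≤ W ((k : ℤ) - 1) := by
  intro x hx
  obtain ⟨b, hb⟩ := hW.2.2.1
  have near_top : ∀ᶠ c : ℕ in atTop, k ≤ c → x ∈ W ((c : ℤ) - 1) :=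
    eventually_atTop.2 ⟨b.toNat + 1, fun c hc _ => hW.monotone (by omega) (hb ▸ Submodule.mem_top)⟩
  refine Nat.decreasing_induction_of_infinite (fun c ih hkc => ?_)
    (Nat.frequently_atTop_iff_infinite.1 near_top.frequently) k le_rfl
  refine (hW.2.2.2.2 c).1 x (hW.monotone (by omega) (ih (by omega))) ?_
  rw [← Nat.sub_add_cancel hkc, pow_add, Module.End.mul_apply, LinearMap.mem_ker.1 hx, map_zero]
  exact zero_mem _

theorem le_map_pow (hW : IsMonodromyFiltration N W) {q n : ℕ} (hqn : q ≤ n) :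
    W (-n) ≤ (W (2 * q - n)).map (N ^ q) := by
  obtain ⟨a, ha⟩ := hW.2.1
  have near_bot : ∀ᶠ n : ℕ in atTop, ∀ q ≤ n, W (-n) ≤ (W (2 * q - n)).map (N ^ q) :=
    eventually_atTop.2 ⟨(-a).toNat, fun n hn q _ =>
      (hW.monotone (by omega)).trans (ha.trans_le bot_le)⟩
  refine Nat.decreasing_induction_of_infinite (fun n ih q hqn => ?_)
    (Nat.frequently_atTop_iff_infinite.1 near_bot.frequently) n q hqn
  intro u hu
  obtain ⟨x, hx, hxu⟩ := (hW.2.2.2.2 n).2 u hu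
  have hrest : u - (N ^ n) x ∈ W (-(n + 1 : ℕ)) :=
    hW.monotone (by omega) (neg_sub ((N ^ n) x) u ▸ neg_mem hxu)
  obtain ⟨x', hx', hx'u⟩ := ih q (by omega) hrest
  have hx_shift : (N ^ (n - q)) x ∈ W (2 * q - n) :=
    hW.monotone (by omega) (hW.map_pow_le (n - q) n (Submodule.mem_map_of_mem hx))
  refine ⟨(N ^ (n - q)) x + x', add_mem hx_shift (hW.monotone (by omega) hx'), ?_⟩
  rw [map_add, hx'u, ← Module.End.mul_apply, ← pow_add, Nat.add_sub_cancel' hqn, add_sub_cancel]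

theorem pow_apply_mem_iff (hW : IsMonodromyFiltration N W) {q n : ℕ} (hqn : q ≤ n) (x : V) :
    (N ^ q) x ∈ W (-n) ↔ ∃ y ∈ LinearMap.ker (N ^ q), x - y ∈ W (2 * q - n) := by
  constructor
  · intro hx
    obtain ⟨x', hx', hx'x⟩ := hW.le_map_pow hqn hx
    exact ⟨x - x', by simp [hx'x], by simpa using hx'⟩
  · rintro ⟨y, hy, hxy⟩
    have := hW.map_pow_le q _ (Submodule.mem_map_of_mem hxy)
    rw [map_sub, LinearMap.mem_ker.1 hy, sub_zero] at this
    exact hW.monotone (by omega) this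

theorem mem_iff_mem_ker_sup (hW : IsMonodromyFiltration N W) {ℓ : ℕ} {x : V}
    (hx : x ∈ LinearMap.ker (N ^ (ℓ + 1))) :
    x ∈ W ((ℓ : ℤ) - 1) ↔
      x ∈ LinearMap.ker (N ^ ℓ) ⊔ (LinearMap.range N ⊓ LinearMap.ker (N ^ (ℓ + 1))) := by
  constructor
  · intro hxW
    have hNx : (N ^ ℓ) x ∈ W (-(ℓ + 1 : ℕ)) :=
      hW.monotone (by omega) (hW.map_pow_le ℓ _ (Submodule.mem_map_of_mem hxW))
    obtain ⟨z, -, hz⟩ := hW.le_map_pow le_rfl hNx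
    have hNz : (N ^ ℓ) (N z) = (N ^ ℓ) x := by rw [← hz, ← Module.End.mul_apply, ← pow_succ]
    refine Submodule.mem_sup.2
      ⟨x - N z, ?_, N z, Submodule.mem_inf.2 ⟨LinearMap.mem_range_self N z, ?_⟩,
        sub_add_cancel x (N z)⟩
    · simp [hNz]
    · rw [LinearMap.mem_ker, pow_succ', Module.End.mul_apply, hNz, ← Module.End.mul_apply,
        ← pow_succ']
      exact hx
  · intro hsum
    obtain ⟨a, ha, _, ⟨⟨w, rfl⟩, hNw⟩, rfl⟩ := Submodule.mem_sup.1 hsum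
    have hw : w ∈ LinearMap.ker (N ^ (ℓ + 2)) := by
      rw [LinearMap.mem_ker, pow_succ, Module.End.mul_apply]
      exact hNw
    exact add_mem (hW.ker_pow_le ℓ ha)
      (hW.monotone (by omega) (hW.map_le _ (Submodule.mem_map_of_mem (hW.ker_pow_le _ hw))))

end IsMonodromyFiltration

/-- The map `ker N^{ℓ+1} → gr^W_ℓ` has image `P_ℓ` (second clause) and kernel
`ker N^ℓ + im N ∩ ker N^{ℓ+1}` (third clause). -/
theorem primitive_part_canonical_iso_general
    (V : Type*) [AddCommGroup V] [Module ℂ V]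
    (N : V →ₗ[ℂ] V)
    (W : ℤ → Submodule ℂ V) (hW : IsMonodromyFiltration N W) (ℓ : ℕ) :
    LinearMap.ker (N ^ (ℓ + 1)) ≤ W (ℓ : ℤ) ∧
    (∀ x ∈ W (ℓ : ℤ),
      ((N ^ (ℓ + 1)) x ∈ W (-(ℓ : ℤ) - 3) ↔
        ∃ y ∈ LinearMap.ker (N ^ (ℓ + 1)), x - y ∈ W ((ℓ : ℤ) - 1))) ∧
    (∀ x ∈ LinearMap.ker (N ^ (ℓ + 1)),
      (x ∈ W ((ℓ : ℤ) - 1) ↔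
        x ∈ LinearMap.ker (N ^ ℓ) ⊔
          (LinearMap.range N ⊓ LinearMap.ker (N ^ (ℓ + 1))))) := by
  refine ⟨fun x hx => hW.monotone (by omega) (hW.ker_pow_le (ℓ + 1) hx), fun x _ => ?_,
    fun x hx => hW.mem_iff_mem_ker_sup hx⟩
  rw [show -(ℓ : ℤ) - 3 = -↑(ℓ + 3) by push_cast; ring,
    show (ℓ : ℤ) - 1 = 2 * ↑(ℓ + 1) - ↑(ℓ + 3) by push_cast; ring]
  exact hW.pow_apply_mem_iff (by omega) x

/-- The primitive part `P_ℓ = ker (N^{ℓ+1} : gr^W_ℓ → gr^W_{-ℓ-2})` is canonically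
isomorphic to `ker N^{ℓ+1} / (ker N^ℓ + im N ∩ ker N^{ℓ+1})`, the isomorphism being
induced by the inclusion `ker N^{ℓ+1} ⊆ W ℓ` followed by the projection to `gr^W_ℓ`.
This is expressed at the level of elements: the composite map
`ker N^{ℓ+1} → gr^W_ℓ` has image exactly `P_ℓ` (second clause) and kernel exactly
`ker N^ℓ ⊔ (im N ⊓ ker N^{ℓ+1})` (third clause), so the first isomorphism theorem
produces the canonical isomorphism. -/
theorem primitive_part_canonical_iso
    (V : Type*) [AddCommGroup V] [Module ℂ V] [FiniteDimensional ℂ V]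
    (N : V →ₗ[ℂ] V) (hN : IsNilpotent N)
    (W : ℤ → Submodule ℂ V) (hW : IsMonodromyFiltration N W) (ℓ : ℕ) :
    LinearMap.ker (N ^ (ℓ + 1)) ≤ W (ℓ : ℤ) ∧
    (∀ x ∈ W (ℓ : ℤ),
      ((N ^ (ℓ + 1)) x ∈ W (-(ℓ : ℤ) - 3) ↔
        ∃ y ∈ LinearMap.ker (N ^ (ℓ + 1)), x - y ∈ W ((ℓ : ℤ) - 1))) ∧
    (∀ x ∈ LinearMap.ker (N ^ (ℓ + 1)),
      (x ∈ W ((ℓ : ℤ) - 1) ↔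
        x ∈ LinearMap.ker (N ^ ℓ) ⊔
          (LinearMap.range N ⊓ LinearMap.ker (N ^ (ℓ + 1))))) :=
  primitive_part_canonical_iso_general V N W hW ℓ
end

section
/- Let H be a finitely generated module over the ring ℂ⟦t⟧ of formal power series, equipped with an additive map ∇ : H → H satisfying ∇(g·m) = g·∇(m) + t g'·m for all g ∈ ℂ⟦t⟧, m ∈ H. Suppose there exist polynomials b₁, b₂ ∈ ℂ[s] with all roots in the real interval [0,1) such that b₁(∇)(H) ⊆ tH and b₂(∇+1) annihilates ker(t : H → H). Then multiplication by t is injective on H, i.e. H is torsion-free, hence free. -/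
/-!
Write `t = X`. If `t m = 0` and `m = tᵏ w`, the identity `(∇ - k) ∘ tᵏ = tᵏ ∘ ∇` gives
`b₁(∇ - k) m = tᵏ b₁(∇) w ∈ tᵏ⁺¹ H`, while `b₂(∇ + 1) m = 0`. The roots of `b₁(s - k)` have real
part `≥ k ≥ 0` and those of `b₂(s + 1)` real part `< 0`, so a Bézout identity
`u b₁(s - k) + v b₂(s + 1) = 1` evaluated at `∇` gives `m = u(∇) b₁(∇ - k) m ∈ tᵏ⁺¹ H`, because
`u(∇) tᵏ⁺¹ = tᵏ⁺¹ u(∇ + k + 1)`. Hence `m ∈ ⋂ₖ tᵏ H = 0` by Krull's intersection theorem. Over the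
discrete valuation ring `ℂ⟦t⟧` a module without `t`-torsion is torsion-free, hence free when
finitely generated.
-/

/-- Scalar multiplication by the constant power series `C α` as an additive
endomorphism of a module over `ℂ⟦t⟧`. -/
noncomputable def smulConst {H : Type*} [AddCommGroup H]
    [Module (PowerSeries ℂ) H] (α : ℂ) : AddMonoid.End H :=
  DistribMulAction.toAddMonoidEnd (PowerSeries ℂ) H (PowerSeries.C α)

namespace Polynomial

theorem _root_.SemiconjBy.eval₂ {R S : Type*} [Semiring R] [Semiring S] {f : R →+* S}
    {a b l : S} (h : SemiconjBy l b a) (hf : ∀ c, Commute (f c) l) (p : R[X]) :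
    SemiconjBy l (p.eval₂ f b) (p.eval₂ f a) := by
  induction p using Polynomial.induction_on' with
  | add p q hp hq => simpa only [eval₂_add] using hp.add_right hq
  | monomial n c =>
    simpa only [eval₂_monomial] using SemiconjBy.mul_right (hf c).symm (h.pow_right n)

theorem isCoprime_list_prod_X_sub_C {R : Type*} [CommRing R] {s t : List R}
    (h : ∀ a ∈ s, ∀ b ∈ t, IsUnit (a - b)) :
    IsCoprime (s.map fun a => X - C a).prod (t.map fun b => X - C b).prod := by
  refine List.prod_induction (IsCoprime · _) (fun _ _ => IsCoprime.mul_left) isCoprime_one_left ?_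
  simp only [List.forall_mem_map]
  intro a ha
  refine List.prod_induction (IsCoprime _ ·) (fun _ _ => IsCoprime.mul_right) isCoprime_one_right ?_
  simp only [List.forall_mem_map]
  intro b hb
  exact isCoprime_X_sub_C_of_isUnit_sub (h a ha b hb)

theorem eval₂_list_prod_X_sub_C {R S : Type*} [CommRing R] [Ring S] (f : R →+* S) {x : S}
    (hx : ∀ c, Commute (f c) x) (l : List R) :
    (l.map fun a => X - C a).prod.eval₂ f x = (l.map fun a => x - f a).prod := by
  rw [← eval₂RingHom'_apply f x hx, map_list_prod, List.map_map]
  simp only [Function.comp_def, map_sub, eval₂RingHom'_apply, eval₂_X, eval₂_C]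

end Polynomial

namespace PowerSeries

theorem X_mul_derivative_X_pow {R : Type*} [CommRing R] (k : ℕ) :
    (X : R⟦X⟧) * derivative R (X ^ k) = (k : R⟦X⟧) * X ^ k := by
  cases k with
  | zero => simp
  | succ k =>
    simp only [Derivation.leibniz_pow, derivative_X, Nat.add_sub_cancel, nsmul_eq_mul, smul_eq_mul]
    push_cast; ring

variable {k M : Type*} [Field k] [AddCommGroup M] [Module k⟦X⟧ M]

theorem eq_zero_of_forall_exists_eq_X_pow_smul [Module.Finite k⟦X⟧ M] {m : M}
    (h : ∀ n : ℕ, ∃ w : M, m = (X ^ n : k⟦X⟧) • w) : m = 0 := by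
  have hbot := Ideal.iInf_pow_smul_eq_bot_of_isLocalRing (M := M) (IsLocalRing.maximalIdeal k⟦X⟧)
    (Ideal.IsMaximal.ne_top inferInstance)
  rw [← Submodule.mem_bot k⟦X⟧, ← hbot, Submodule.mem_iInf]
  intro n
  obtain ⟨w, rfl⟩ := h n
  rw [maximalIdeal_eq_span_X, Ideal.span_singleton_pow]
  exact Submodule.smul_mem_smul (Ideal.mem_span_singleton_self _) Submodule.mem_top

theorem isTorsionFree_of_isSMulRegular_X (h : IsSMulRegular M (X : k⟦X⟧)) :
    Module.IsTorsionFree k⟦X⟧ M := by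
  refine ⟨fun r hr => ?_⟩
  rw [← X_pow_order_mul_divXPowOrder (f := r)]
  exact (h.pow _).mul ((isUnit_divided_by_X_pow_order hr.ne_zero).isSMulRegular M)

end PowerSeries

open PowerSeries

noncomputable section LogConnection

variable {R H : Type*} [CommRing R] [AddCommGroup H] [Module R⟦X⟧ H]

variable (R H) in
def constSMulEnd : R →+* AddMonoid.End H := (Module.toAddMonoidEnd R⟦X⟧ H).comp C

variable (R) in
def IsLogConnection (D : AddMonoid.End H) : Prop :=
  ∀ (g : R⟦X⟧) (m : H), D (g • m) = g • D m + (X * derivative R g) • m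

variable {D : AddMonoid.End H}

theorem IsLogConnection.commute_constSMulEnd (hD : IsLogConnection R D) (c : R) :
    Commute (constSMulEnd R H c) D := by
  ext m
  show C c • D m = D (C c • m)
  rw [hD, derivative_C, mul_zero, zero_smul, add_zero]

theorem IsLogConnection.semiconjBy_X_pow (hD : IsLogConnection R D) (k : ℕ) :
    SemiconjBy (Module.toAddMonoidEnd R⟦X⟧ H (X ^ k)) (D + k) D := by
  ext m
  show (X ^ k : R⟦X⟧) • (D m + (k : AddMonoid.End H) m) = D ((X ^ k : R⟦X⟧) • m)
  rw [hD, X_mul_derivative_X_pow, smul_add, mul_smul, Nat.cast_smul_eq_nsmul, smul_comm]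
  rfl

theorem IsLogConnection.eval₂_apply_X_pow_smul (hD : IsLogConnection R D) (p : Polynomial R)
    (k : ℕ) (w : H) : p.eval₂ (constSMulEnd R H) D ((X ^ k : R⟦X⟧) • w) =
      (X ^ k : R⟦X⟧) • p.eval₂ (constSMulEnd R H) (D + k) w :=
  (DFunLike.congr_fun ((hD.semiconjBy_X_pow k).eval₂ (f := constSMulEnd R H)
    (fun c => (Commute.all (C c) _).map (Module.toAddMonoidEnd R⟦X⟧ H)) p) w).symm

theorem IsLogConnection.commute_constSMulEnd_add_natCast (hD : IsLogConnection R D) (k : ℕ)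
    (c : R) : Commute (constSMulEnd R H c) (D + k) :=
  (hD.commute_constSMulEnd c).add_right (Nat.cast_commute k _).symm

end LogConnection

section Complex

variable {H : Type*} [AddCommGroup H] [Module ℂ⟦X⟧ H] {D : AddMonoid.End H}

theorem smulConst_eq_constSMulEnd (α : ℂ) :
    (smulConst α : AddMonoid.End H) = constSMulEnd ℂ H α :=
  rfl

theorem IsLogConnection.exists_eq_X_pow_succ_smul (hD : IsLogConnection ℂ D) {l₁ l₂ : List ℂ}
    (hl₁ : ∀ α ∈ l₁, 0 ≤ α.re) (hl₂ : ∀ β ∈ l₂, β.re < 1)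
    (hb₁ : ∀ m : H, ∃ m' : H,
      ((l₁.map (fun α => D - smulConst α)).prod : AddMonoid.End H) m = (X : ℂ⟦X⟧) • m')
    {m : H} (hm : ((l₂.map (fun α => D + 1 - smulConst α)).prod : AddMonoid.End H) m = 0)
    {k : ℕ} {w : H} (hw : m = (X ^ k : ℂ⟦X⟧) • w) : ∃ w', m = (X ^ (k + 1) : ℂ⟦X⟧) • w' := by
  simp only [smulConst_eq_constSMulEnd] at hb₁ hm
  let E := Polynomial.eval₂RingHom' (constSMulEnd ℂ H) D hD.commute_constSMulEnd
  -- `q₁ = b₁(s - k)` and `q₂ = b₂(s + 1)`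
  set q₁ := ((l₁.map (· + (k : ℂ))).map fun a => Polynomial.X - Polynomial.C a).prod
  set q₂ := ((l₂.map (· - 1)).map fun a => Polynomial.X - Polynomial.C a).prod
  have hcop : IsCoprime q₁ q₂ := by
    refine Polynomial.isCoprime_list_prod_X_sub_C ?_
    simp only [List.forall_mem_map]
    intro α hα β hβ
    refine (sub_ne_zero.mpr fun h => ?_).isUnit
    have := congrArg Complex.re h
    simp only [Complex.add_re, Complex.sub_re, Complex.natCast_re, Complex.one_re] at this
    linarith [hl₁ α hα, hl₂ β hβ, (Nat.cast_nonneg k : (0 : ℝ) ≤ k)]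
  obtain ⟨u, v, huv⟩ := hcop
  obtain ⟨m', hm'⟩ := hb₁ w
  have h₁ : E q₁ m = (X ^ (k + 1) : ℂ⟦X⟧) • m' := by
    rw [Polynomial.eval₂RingHom'_apply, hw, hD.eval₂_apply_X_pow_smul,
      Polynomial.eval₂_list_prod_X_sub_C _ (hD.commute_constSMulEnd_add_natCast k), List.map_map]
    simp only [Function.comp_def, map_add, map_natCast, add_sub_add_right_eq_sub]
    rw [hm', smul_smul, ← pow_succ]
  have h₂ : E q₂ m = 0 := by
    rw [Polynomial.eval₂RingHom'_apply,
      Polynomial.eval₂_list_prod_X_sub_C _ hD.commute_constSMulEnd, List.map_map]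
    simpa only [Function.comp_def, map_sub, map_one, sub_sub_eq_add_sub] using hm
  refine ⟨(u.eval₂ (constSMulEnd ℂ H) (D + (k + 1 : ℕ))) m', ?_⟩
  calc m = E (u * q₁ + v * q₂) m := by rw [huv, map_one]; rfl
    _ = E u (E q₁ m) + E v (E q₂ m) := by rw [map_add, map_mul, map_mul]; rfl
    _ = E u ((X ^ (k + 1) : ℂ⟦X⟧) • m') := by rw [h₁, h₂, map_zero, add_zero]
    _ = _ := hD.eval₂_apply_X_pow_smul u (k + 1) m'

theorem IsLogConnection.exists_eq_X_pow_smul (hD : IsLogConnection ℂ D) {l₁ l₂ : List ℂ}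
    (hl₁ : ∀ α ∈ l₁, 0 ≤ α.re) (hl₂ : ∀ β ∈ l₂, β.re < 1)
    (hb₁ : ∀ m : H, ∃ m' : H,
      ((l₁.map (fun α => D - smulConst α)).prod : AddMonoid.End H) m = (X : ℂ⟦X⟧) • m')
    {m : H} (hm : ((l₂.map (fun α => D + 1 - smulConst α)).prod : AddMonoid.End H) m = 0)
    (k : ℕ) : ∃ w, m = (X ^ k : ℂ⟦X⟧) • w := by
  induction k with
  | zero => exact ⟨m, by rw [pow_zero, one_smul]⟩
  | succ k ih =>
    obtain ⟨w, hw⟩ := ih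
    exact hD.exists_eq_X_pow_succ_smul hl₁ hl₂ hb₁ hm hw

end Complex

/-- Let `H` be a finitely generated module over `ℂ⟦t⟧` with an additive operator
`∇` satisfying the logarithmic Leibniz rule `∇(g•m) = g•∇m + (t g')•m`.  If there
are (nonzero) polynomials `b₁ = ∏ (s - α)`, `b₂ = ∏ (s - α)` (given by their lists
of roots, all real and lying in `[0,1)`) such that `b₁(∇) H ⊆ t H` and `b₂(∇ + 1)`
kills `ker (t : H → H)`, then multiplication by `t` is injective on `H`; hence `H`
is torsion-free and therefore free. -/
theorem log_connection_torsion_free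
    (H : Type*) [AddCommGroup H] [Module (PowerSeries ℂ) H]
    [Module.Finite (PowerSeries ℂ) H]
    (D : AddMonoid.End H)
    (hLeib : ∀ (g : PowerSeries ℂ) (m : H),
      D (g • m) = g • D m
        + ((PowerSeries.X : PowerSeries ℂ) * PowerSeries.derivative ℂ g) • m)
    (l₁ l₂ : List ℂ)
    (hl₁ : ∀ α ∈ l₁, α.im = 0 ∧ 0 ≤ α.re ∧ α.re < 1)
    (hl₂ : ∀ α ∈ l₂, α.im = 0 ∧ 0 ≤ α.re ∧ α.re < 1)
    (hb₁ : ∀ m : H, ∃ m' : H,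
      (((l₁.map (fun α => D - smulConst α)).prod : AddMonoid.End H)) m
        = (PowerSeries.X : PowerSeries ℂ) • m')
    (hb₂ : ∀ m : H, (PowerSeries.X : PowerSeries ℂ) • m = 0 →
      (((l₂.map (fun α => D + 1 - smulConst α)).prod : AddMonoid.End H)) m = 0) :
    (∀ m : H, (PowerSeries.X : PowerSeries ℂ) • m = 0 → m = 0) ∧
    Module.Free (PowerSeries ℂ) H := by
  have hX : IsSMulRegular H (PowerSeries.X : PowerSeries ℂ) :=
    isSMulRegular_iff_right_eq_zero_of_smul.mpr fun m hm =>
      PowerSeries.eq_zero_of_forall_exists_eq_X_pow_smul <|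
        IsLogConnection.exists_eq_X_pow_smul hLeib (fun α hα => (hl₁ α hα).2.1)
          (fun β hβ => (hl₂ β hβ).2.2) hb₁ (hb₂ m hm)
  have := PowerSeries.isTorsionFree_of_isSMulRegular_X hX
  exact ⟨isSMulRegular_iff_right_eq_zero_of_smul.mp hX, inferInstance⟩
end

section
/- Let V be a finite-dimensional complex vector space carrying a representation of sl₂(ℂ) × sl₂(ℂ) with triples (X₁,Y₁,H₁) and (X₂,Y₂,H₂), and let d ∈ End(V) satisfy d² = 0, [H₁,d] = d, [H₂,d] = −d, [X₁,d] = 0, [Y₂,d] = 0. Define d* = [X₂, [Y₁, d]]. Then the Laplace operator Δ = d d* + d* d commutes with the entire sl₂ × sl₂ action: [X₁, Δ] = [Y₁, Δ] = [X₂, Δ] = [Y₂, Δ] = 0. -/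
/-!
Write `d₁ = ⁅Y₁, d⁆`, `d₂ = ⁅X₂, d⁆` and `d* = ⁅X₂, d₁⁆ = ⁅Y₁, d₂⁆`. For the first triple `d` is a
primitive vector of weight `1`, so `⁅Y₁, d₁⁆` and `d₁ * d₁` are primitive of weights `-3` and `-2`;
finite-dimensionality forces both to vanish. The same holds for the second triple with the roles of
`X₂` and `Y₂` exchanged. Hence `ad X₁`, `ad Y₁`, `ad X₂`, `ad Y₂` send `d*` to `d₂`, `0`, `0`, `d₁`
respectively, and in each case `⁅a, d d* + d* d⁆` is a bracket `⁅b, x * x⁆` with `x * x = 0`.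
-/

section

attribute [local instance] LieRing.ofAssociativeRing

namespace Ring

variable {A : Type*} [Ring A]

lemma lie_mul (a x y : A) : ⁅a, x * y⁆ = ⁅a, x⁆ * y + x * ⁅a, y⁆ := by
  simp only [lie_def]
  noncomm_ring

lemma mul_lie_add_lie_mul_eq_zero {x : A} (a : A) (hx : x * x = 0) :
    x * ⁅a, x⁆ + ⁅a, x⁆ * x = 0 := by
  rw [add_comm, ← lie_mul, hx, lie_zero]

lemma lie_mul_add_mul (a x y : A) :
    ⁅a, x * y + y * x⁆ = (⁅a, x⁆ * y + y * ⁅a, x⁆) + (x * ⁅a, y⁆ + ⁅a, y⁆ * x) := by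
  rw [lie_add, lie_mul, lie_mul]
  abel

lemma lie_mul_add_mul_eq_zero_of_lie_left_eq_zero {a b x y : A} (hx : x * x = 0)
    (hax : ⁅a, x⁆ = 0) (hay : ⁅a, y⁆ = ⁅b, x⁆) : ⁅a, x * y + y * x⁆ = 0 := by
  rw [lie_mul_add_mul, hax, hay, zero_mul, mul_zero, add_zero, zero_add]
  exact mul_lie_add_lie_mul_eq_zero b hx

lemma lie_mul_add_mul_eq_zero_of_lie_right_eq_zero {a b x y : A} (hx : ⁅a, x⁆ * ⁅a, x⁆ = 0)
    (hay : ⁅a, y⁆ = 0) (hy : y = ⁅b, ⁅a, x⁆⁆) : ⁅a, x * y + y * x⁆ = 0 := by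
  rw [lie_mul_add_mul, hay, zero_mul, mul_zero, add_zero, add_zero, hy]
  exact mul_lie_add_lie_mul_eq_zero b hx

end Ring

namespace IsSl2Triple

section LieModule

variable {R L M : Type*} [CommRing R] [LieRing L] [LieAlgebra R L]
  [AddCommGroup M] [Module R M] [LieRingModule L M] [LieModule R L M]
  {h e f : L}

lemma lie_e_lie_f (t : IsSl2Triple h e f) (m : M) : ⁅e, ⁅f, m⁆⁆ = ⁅h, m⁆ + ⁅f, ⁅e, m⁆⁆ := by
  rw [leibniz_lie, t.lie_e_f]

lemma lie_h_lie_f_of_lie_h_eq_smul (t : IsSl2Triple h e f) {m : M} {μ : R}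
    (hm : ⁅h, m⁆ = μ • m) : ⁅h, ⁅f, m⁆⁆ = (μ - 2) • ⁅f, m⁆ := by
  rw [leibniz_lie, t.lie_lie_smul_f R, hm, neg_lie, smul_lie, lie_smul, sub_smul]
  abel

lemma eq_zero_of_lie_e_eq_zero [IsNoetherian R M] [Module.IsTorsionFree R M] [IsDomain R]
    [CharZero R] (t : IsSl2Triple h e f) {m : M} {μ : R} (hμ : ∀ n : ℕ, μ ≠ n)
    (hm : ⁅h, m⁆ = μ • m) (hem : ⁅e, m⁆ = 0) : m = 0 := by
  by_contra hm₀
  obtain ⟨n, hn⟩ := (⟨hm₀, hm, hem⟩ : t.HasPrimitiveVectorWith m μ).exists_nat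
  exact hμ n hn

variable (R) in
lemma lie_f_lie_f_eq_zero [IsNoetherian R M] [Module.IsTorsionFree R M] [IsDomain R]
    [CharZero R] (t : IsSl2Triple h e f) {m : M} (hm : ⁅h, m⁆ = m) (hem : ⁅e, m⁆ = 0) :
    ⁅f, ⁅f, m⁆⁆ = 0 := by
  have hfm := t.lie_h_lie_f_of_lie_h_eq_smul (μ := (1 : R)) (by rw [one_smul, hm])
  have hefm : ⁅e, ⁅f, m⁆⁆ = m := by rw [t.lie_e_lie_f, hem, lie_zero, add_zero, hm]
  refine t.eq_zero_of_lie_e_eq_zero (μ := (-3 : R)) (fun n => by norm_cast) ?_ ?_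
  · rw [t.lie_h_lie_f_of_lie_h_eq_smul hfm]
    norm_num
  · rw [t.lie_e_lie_f, hefm, hfm]
    module

end LieModule

section Associative

variable {R A : Type*} [CommRing R] [IsDomain R] [CharZero R] [Ring A] [Algebra R A] {h e f : A}

variable (R) in
lemma lie_f_mul_lie_f_eq_zero [IsNoetherian R A] [Module.IsTorsionFree R A]
    (t : IsSl2Triple h e f) {a : A} (ha : ⁅h, a⁆ = a) (hea : ⁅e, a⁆ = 0) (ha₂ : a * a = 0) :
    ⁅f, a⁆ * ⁅f, a⁆ = 0 := by
  have hfa : ⁅h, ⁅f, a⁆⁆ = (-1 : R) • ⁅f, a⁆ := by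
    rw [t.lie_h_lie_f_of_lie_h_eq_smul (μ := (1 : R)) (by rw [one_smul, ha])]
    norm_num
  have hefa : ⁅e, ⁅f, a⁆⁆ = a := by rw [t.lie_e_lie_f, hea, lie_zero, add_zero, ha]
  refine t.eq_zero_of_lie_e_eq_zero (μ := (-2 : R)) (fun n => by norm_cast) ?_ ?_
  · rw [Ring.lie_mul, hfa, smul_mul_assoc, mul_smul_comm]
    module
  · rw [Ring.lie_mul, hefa]
    exact Ring.mul_lie_add_lie_mul_eq_zero f ha₂

end Associative

end IsSl2Triple

end

/-- Let `V` carry a representation of `sl₂(ℂ) × sl₂(ℂ)` via two commuting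
`sl₂`-triples `(X₁, Y₁, H₁)` and `(X₂, Y₂, H₂)`, and let `d` be an endomorphism
with `d² = 0`, `[H₁, d] = d`, `[H₂, d] = −d`, `[X₁, d] = 0`, `[Y₂, d] = 0`.
Then the Laplace operator `Δ = d d* + d* d`, with `d* = [X₂, [Y₁, d]]`, commutes
with the whole `sl₂ × sl₂`-action. -/
theorem laplacian_commutes_with_sl2_action
    (V : Type*) [AddCommGroup V] [Module ℂ V] [FiniteDimensional ℂ V]
    (X₁ Y₁ H₁ X₂ Y₂ H₂ d : Module.End ℂ V)
    (h₁ : ⁅X₁, Y₁⁆ = H₁) (h₂ : ⁅H₁, X₁⁆ = 2 • X₁) (h₃ : ⁅H₁, Y₁⁆ = -(2 • Y₁))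
    (h₄ : ⁅X₂, Y₂⁆ = H₂) (h₅ : ⁅H₂, X₂⁆ = 2 • X₂) (h₆ : ⁅H₂, Y₂⁆ = -(2 • Y₂))
    (hcomm : ∀ a ∈ ({X₁, Y₁, H₁} : Set (Module.End ℂ V)),
      ∀ b ∈ ({X₂, Y₂, H₂} : Set (Module.End ℂ V)), ⁅a, b⁆ = 0)
    (hd2 : d * d = 0)
    (hH₁d : ⁅H₁, d⁆ = d) (hH₂d : ⁅H₂, d⁆ = -d)
    (hX₁d : ⁅X₁, d⁆ = 0) (hY₂d : ⁅Y₂, d⁆ = 0) :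
    ⁅X₁, d * ⁅X₂, ⁅Y₁, d⁆⁆ + ⁅X₂, ⁅Y₁, d⁆⁆ * d⁆ = 0 ∧
    ⁅Y₁, d * ⁅X₂, ⁅Y₁, d⁆⁆ + ⁅X₂, ⁅Y₁, d⁆⁆ * d⁆ = 0 ∧
    ⁅X₂, d * ⁅X₂, ⁅Y₁, d⁆⁆ + ⁅X₂, ⁅Y₁, d⁆⁆ * d⁆ = 0 ∧
    ⁅Y₂, d * ⁅X₂, ⁅Y₁, d⁆⁆ + ⁅X₂, ⁅Y₁, d⁆⁆ * d⁆ = 0 := by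
  -- the bracket in the statement is the ring commutator, which is not a global Lie ring instance
  let : LieRing (Module.End ℂ V) := LieRing.ofAssociativeRing
  rcases eq_or_ne H₁ 0 with hH₁ | hH₁
  · obtain rfl : d = 0 := by rw [← hH₁d, hH₁, zero_lie]
    simp
  rcases eq_or_ne H₂ 0 with hH₂ | hH₂
  · obtain rfl : d = 0 := by rw [← neg_neg d, ← hH₂d, hH₂, zero_lie, neg_zero]
    simp
  have t₁ : IsSl2Triple H₁ X₁ Y₁ := ⟨hH₁, h₁, h₂, h₃⟩
  have t₂ : IsSl2Triple (-H₂) Y₂ X₂ := IsSl2Triple.symm ⟨hH₂, h₄, h₅, h₆⟩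
  have hH₂d' : ⁅-H₂, d⁆ = d := by rw [neg_lie, hH₂d, neg_neg]
  have comm {a b : Module.End ℂ V} (ha : a ∈ ({X₁, Y₁, H₁} : Set _))
      (hb : b ∈ ({X₂, Y₂, H₂} : Set _)) (x : Module.End ℂ V) : ⁅a, ⁅b, x⁆⁆ = ⁅b, ⁅a, x⁆⁆ := by
    rw [leibniz_lie, hcomm a ha b hb, zero_lie, zero_add]
  have hdstar : ⁅X₂, ⁅Y₁, d⁆⁆ = ⁅Y₁, ⁅X₂, d⁆⁆ := (comm (by simp) (by simp) d).symm
  refine ⟨?_, ?_, ?_, ?_⟩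
  · refine Ring.lie_mul_add_mul_eq_zero_of_lie_left_eq_zero (b := X₂) hd2 hX₁d ?_
    rw [comm (by simp) (by simp), t₁.lie_e_lie_f, hX₁d, lie_zero, add_zero, hH₁d]
  · refine Ring.lie_mul_add_mul_eq_zero_of_lie_right_eq_zero
      (t₁.lie_f_mul_lie_f_eq_zero ℂ hH₁d hX₁d hd2) ?_ rfl
    rw [comm (by simp) (by simp), t₁.lie_f_lie_f_eq_zero ℂ hH₁d hX₁d, lie_zero]
  · rw [hdstar]
    refine Ring.lie_mul_add_mul_eq_zero_of_lie_right_eq_zero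
      (t₂.lie_f_mul_lie_f_eq_zero ℂ hH₂d' hY₂d hd2) ?_ rfl
    rw [← comm (by simp) (by simp), t₂.lie_f_lie_f_eq_zero ℂ hH₂d' hY₂d, lie_zero]
  · refine Ring.lie_mul_add_mul_eq_zero_of_lie_left_eq_zero (b := Y₁) hd2 hY₂d ?_
    rw [hdstar, ← comm (by simp) (by simp), t₂.lie_e_lie_f, hY₂d, lie_zero, add_zero, hH₂d']
end

section
/- Let V = ⊕_ℓ V_ℓ be a Hodge–Lefschetz structure of central weight n: an sl₂(ℂ)-representation (with H acting by ℓ on V_ℓ) together with filtrations making each V_ℓ a Hodge structure of weight n+ℓ, such that X and Y are morphisms of Hodge structures of type (1,1) and (−1,−1) respectively, with X^ℓ : V_{-ℓ} → V_ℓ(ℓ) and Y^ℓ : V_ℓ → V_{-ℓ}(−ℓ) isomorphisms of Hodge structures. Then the Weil element w = e^X e^{-Y} e^X maps V_k isomorphically onto V_{-k} as a morphism of Hodge structures V_k → V_{-k}(−k); moreover the Lefschetz decomposition of any a ∈ V_k^{p,q} has components a_j ∈ V_{k-2j}^{p-j,q-j}. -/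
/-- The exponential of an endomorphism of a finite-dimensional complex vector
space, as a finite sum; it agrees with the analytic exponential whenever the
endomorphism is nilpotent. -/
noncomputable def nilExp {V : Type*} [AddCommGroup V] [Module ℂ V]
    [FiniteDimensional ℂ V] (f : Module.End ℂ V) : Module.End ℂ V :=
  ∑ k ∈ Finset.range (Module.finrank ℂ V + 1), ((k.factorial : ℂ))⁻¹ • f ^ k

/-!
The Weil element `w = e^X e^{-Y} e^X` anticommutes with `H`: for a nilpotent `A` with
`[A, B] = C` and `[A, C] = t A`, the truncated exponential satisfies
`e^A B = (B + C + (t/2) A) e^A`, and three applications give `w H = -H w`. Since `X` and `Y`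
preserve the sum of the Hodge pieces `V_ℓ^{p,q}` with fixed `2p - ℓ` and `2q - ℓ`, so does `w`;
inside such a sum the `H`-eigenvalue `ℓ` determines the piece, so `w` maps `V_k^{p,q}` into
`V_{-k}^{p-k,q-k}`. As `w` is injective and also maps `V_{-k}^{p-k,q-k}` back into `V_k^{p,q}`,
the two pieces have the same dimension and `w` is onto.

The Lefschetz decomposition of `a ∈ V_k^{p,q}` is built by descending induction on the weight:
for `k > 0` write `a = X^k b` with `b ∈ V_{-k}^{p-k,q-k}`; for `k ≤ 0` choose
`b ∈ V_{k-2}^{p-1,q-1}` with `X^{2-k} b = X^{1-k} a`, so that `a - X b` is killed by `X^{1-k}`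
and hence, by the `sl₂` commutation relations and injectivity of `X^{2-k}` on `V_{k-2}`, by `Y`.
Nilpotency of `X` ends the recursion.
-/

open Finset
open scoped Nat

section TruncExp

variable (K : Type*) {R : Type*} [Field K] [Ring R] [Algebra K R]

noncomputable def truncExp (a : R) (m : ℕ) : R :=
  ∑ k ∈ range m, ((k ! : K))⁻¹ • a ^ k

variable {K}

lemma truncExp_succ (a : R) (m : ℕ) :
    truncExp K a (m + 1) = truncExp K a m + ((m ! : K))⁻¹ • a ^ m :=
  sum_range_succ _ _

lemma truncExp_eq_of_pow_eq_zero {a : R} {k m : ℕ} (ha : a ^ k = 0) (hkm : k ≤ m) :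
    truncExp K a m = truncExp K a k := by
  induction m, hkm using Nat.le_induction with
  | base => rfl
  | succ m hkm ih => rw [truncExp_succ, ih, pow_eq_zero_of_le hkm ha, smul_zero, add_zero]

lemma commute_truncExp (a : R) (m : ℕ) : Commute a (truncExp K a m) :=
  Commute.sum_right _ _ _ fun k _ => ((Commute.refl a).pow_right k).smul_right _

lemma isUnit_truncExp {a : R} (ha : IsNilpotent a) (m : ℕ) : IsUnit (truncExp K a (m + 1)) := by
  rw [truncExp, sum_range_succ', Nat.factorial_zero, Nat.cast_one, inv_one, pow_zero, one_smul,
    add_comm]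
  refine (Commute.isNilpotent_sum (fun k _ => ?_) fun i j _ _ => ?_).isUnit_one_add
  · exact (ha.pow_succ k).smul _
  · exact ((Commute.pow_pow_self a _ _).smul_left _).smul_right _

variable [CharZero K] {a b c : R} {t : K}

lemma pow_succ_mul_of_lie (hb : a * b = b * a + c) (hc : a * c = c * a + t • a) (n : ℕ) :
    a ^ (n + 1) * b =
      b * a ^ (n + 1) + (n + 1 : K) • (c * a ^ n) + (t * (n * (n + 1) / 2)) • a ^ n := by
  induction n with
  | zero => simpa using hb
  | succ n ih =>
    calc a ^ (n + 2) * b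
        = (a * b) * a ^ (n + 1) + (n + 1 : K) • ((a * c) * a ^ n)
          + (t * (n * (n + 1) / 2)) • (a * a ^ n) := by
          rw [pow_succ' a (n + 1), mul_assoc, ih]
          simp only [mul_add, mul_smul_comm, mul_assoc]
      _ = _ := by
          rw [hb, hc]
          simp only [add_mul, smul_mul_assoc, mul_assoc]
          rw [← pow_succ' a (n + 1), ← pow_succ' a n]
          push_cast
          module

lemma truncExp_mul_of_lie (hb : a * b = b * a + c) (hc : a * c = c * a + t • a) (m : ℕ) :
    truncExp K a (m + 2) * b = b * truncExp K a (m + 2) + c * truncExp K a (m + 1)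
      + (t / 2) • (a * truncExp K a m) := by
  induction m with
  | zero => simp [truncExp, sum_range_succ, add_mul, mul_add, hb, add_assoc]
  | succ m ih =>
    have hterm : (((m + 2) ! : K))⁻¹ • a ^ (m + 2) * b = b * ((((m + 2) ! : K))⁻¹ • a ^ (m + 2))
        + c * ((((m + 1) ! : K))⁻¹ • a ^ (m + 1)) + (t / 2) • (a * (((m ! : K))⁻¹ • a ^ m)) := by
      rw [smul_mul_assoc, pow_succ_mul_of_lie hb hc (m + 1)]
      simp only [mul_smul_comm]
      rw [← pow_succ' a m]
      have h1 : (m + 1 : K) ≠ 0 := Nat.cast_add_one_ne_zero m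
      have h2 : (m + 1 + 1 : K) ≠ 0 := by exact_mod_cast Nat.succ_ne_zero (m + 1)
      have h3 : (m ! : K) ≠ 0 := Nat.cast_ne_zero.mpr (Nat.factorial_ne_zero m)
      simp only [Nat.factorial_succ, Nat.cast_mul, Nat.cast_succ]
      match_scalars <;> field_simp
    rw [truncExp_succ a (m + 2), add_mul, ih, hterm, truncExp_succ a (m + 1), truncExp_succ a m]
    simp only [mul_add, smul_add]
    abel

lemma truncExp_mul_of_pow_eq_zero {m : ℕ} (ha : a ^ m = 0) (hb : a * b = b * a + c)
    (hc : a * c = c * a + t • a) :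
    truncExp K a m * b = (b + c + (t / 2) • a) * truncExp K a m := by
  have h := truncExp_mul_of_lie hb hc m
  rw [truncExp_eq_of_pow_eq_zero ha (by omega : m ≤ m + 2),
    truncExp_eq_of_pow_eq_zero ha (by omega : m ≤ m + 1)] at h
  rw [h, add_mul, add_mul, smul_mul_assoc, (commute_truncExp a m).eq]

lemma truncExp_weil_mul_eq_neg_mul {x y h : R} {m : ℕ} (hx : x ^ m = 0) (hy : y ^ m = 0)
    (hxy : ⁅x, y⁆ = h) (hhx : ⁅h, x⁆ = 2 • x) (hhy : ⁅h, y⁆ = -(2 • y)) :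
    truncExp K x m * truncExp K (-y) m * truncExp K x m * h =
      -(h * (truncExp K x m * truncExp K (-y) m * truncExp K x m)) := by
  rw [Ring.lie_def] at hxy hhx hhy
  have hy' : (-y) ^ m = 0 := by rw [neg_pow, hy, mul_zero]
  have hxh : x * h = h * x + (-2 : K) • x := by
    rw [neg_smul, two_smul, ← two_nsmul, ← hhx]; abel
  have hyh : -y * h = h * -y + (2 : K) • -y := by
    rw [two_smul, ← two_nsmul, smul_neg, ← hhy]; noncomm_ring
  have hyx : -y * x = x * -y + h := by rw [← hxy]; noncomm_ring
  have hxx : x * ((-2 : K) • x) = ((-2 : K) • x) * x + (0 : K) • x := by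
    rw [zero_smul, add_zero, mul_smul_comm, smul_mul_assoc]
  have hyy : -y * ((2 : K) • -y) = ((2 : K) • -y) * -y + (0 : K) • -y := by
    rw [zero_smul, add_zero, mul_smul_comm, smul_mul_assoc]
  set ex := truncExp K x m
  set ey := truncExp K (-y) m
  have s1 : ex * h = (h + (-2 : K) • x) * ex := by
    rw [truncExp_mul_of_pow_eq_zero hx hxh hxx, zero_div, zero_smul, add_zero]
  have s2 : ey * (h + (-2 : K) • x) = (-h + (-2 : K) • x) * ey := by
    rw [mul_add, mul_smul_comm, truncExp_mul_of_pow_eq_zero hy' hyh hyy,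
      truncExp_mul_of_pow_eq_zero hy' hyx hyh, ← smul_mul_assoc, ← add_mul]
    congr 1
    module
  have s3 : ex * (-h + (-2 : K) • x) = -h * ex := by
    rw [mul_add, mul_neg, mul_smul_comm, s1, (commute_truncExp x m).symm.eq]
    noncomm_ring
  calc ex * ey * ex * h = ex * (ey * (h + (-2 : K) • x)) * ex := by
        rw [mul_assoc _ ex, s1]; noncomm_ring
    _ = -(h * (ex * ey * ex)) := by rw [s2, ← mul_assoc, s3]; noncomm_ring

end TruncExp

section Grading

variable {K V ι : Type*} [Field K] [AddCommGroup V] [Module K V] {Q : ι → Submodule K V}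

lemma pow_finrank_eq_zero_of_mapsTo_succ [FiniteDimensional K V] [DecidableEq ι]
    (hQ : DirectSum.IsInternal Q) (σ : ι → ι) (deg : ι → ℤ) (hdeg : ∀ i, deg (σ i) = deg i + 1)
    {A : Module.End K V} (hA : ∀ i, ∀ x ∈ Q i, A x ∈ Q (σ i)) :
    A ^ Module.finrank K V = 0 := by
  set d := Module.finrank K V
  have hdeg_iter : ∀ j i, deg (σ^[j] i) = deg i + j := by
    intro j
    induction j with
    | zero => simp
    | succ j ih => intro i; rw [Function.iterate_succ_apply', hdeg, ih]; push_cast; ring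
  have hmem : ∀ j i, ∀ x ∈ Q i, (A ^ j) x ∈ Q (σ^[j] i) := by
    intro j
    induction j with
    | zero => simp
    | succ j ih =>
      intro i x hx
      rw [pow_succ', Module.End.mul_apply, Function.iterate_succ_apply']
      exact hA _ _ (ih i x hx)
  suffices ∀ i, Q i ≤ LinearMap.ker (A ^ d) by
    rw [← LinearMap.ker_eq_top, eq_top_iff, ← hQ.submodule_iSup_eq_top]
    exact iSup_le this
  intro i x hx
  by_contra hne
  rw [LinearMap.mem_ker] at hne
  -- the `d + 1` vectors `A ^ j x` are nonzero and lie in distinct summands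
  have hne_zero : ∀ j : Fin (d + 1), (A ^ (j : ℕ)) x ≠ 0 := fun j h0 => hne <| by
    rw [← Nat.sub_add_cancel (Nat.lt_succ_iff.mp j.2), pow_add, Module.End.mul_apply, h0,
      map_zero]
  have hinj : Function.Injective fun j : Fin (d + 1) => σ^[j] i := fun j j' h => by
    have := congrArg deg h
    simp only [hdeg_iter] at this
    exact Fin.ext (by omega)
  have hli := (hQ.submodule_iSupIndep.comp hinj).linearIndependent _
    (fun j => hmem j i x hx) hne_zero
  simpa [d] using hli.fintype_card_le_finrank

lemma apply_mem_biSup_of_mapsTo {A : Module.End K V} (σ : ι → ι)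
    (hA : ∀ i, ∀ x ∈ Q i, A x ∈ Q (σ i)) {S : Set ι} (hS : ∀ i ∈ S, σ i ∈ S) :
    ∀ x ∈ ⨆ i ∈ S, Q i, A x ∈ ⨆ i ∈ S, Q i := by
  have : ⨆ i ∈ S, Q i ≤ (⨆ i ∈ S, Q i).comap A :=
    iSup₂_le fun i hi x hx => le_biSup Q (hS i hi) (hA i x hx)
  exact fun x hx => this hx

lemma mem_of_mem_biSup_of_apply_eq_smul {H : Module.End K V} (f : ι → K)
    (hH : ∀ i, ∀ x ∈ Q i, H x = f i • x) {S : Set ι} {i₀ : ι}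
    (hS : ∀ i ∈ S, f i = f i₀ → i = i₀) {v : V} (hv : v ∈ ⨆ i ∈ S, Q i)
    (hHv : H v = f i₀ • v) : v ∈ Q i₀ := by
  have hle : ⨆ i ∈ S, Q i ≤ Q i₀ ⊔ ⨆ (μ) (_ : μ ≠ f i₀), H.eigenspace μ := by
    refine iSup₂_le fun i hi => ?_
    by_cases hfi : f i = f i₀
    · rw [hS i hi hfi]
      exact le_sup_left
    · refine le_sup_of_le_right (le_trans (fun x hx => ?_) (le_biSup _ hfi))
      exact Module.End.mem_eigenspace_iff.mpr (hH i x hx)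
  obtain ⟨u, hu, u', hu', rfl⟩ := Submodule.mem_sup.mp (hle hv)
  have hu'_eigen : u' ∈ H.eigenspace (f i₀) := by
    rw [Module.End.mem_eigenspace_iff]
    rw [map_add, hH i₀ u hu, smul_add] at hHv
    exact add_left_cancel hHv
  rw [Submodule.disjoint_def.mp (Module.End.eigenspaces_iSupIndep H (f i₀)) u' hu'_eigen hu',
    add_zero]
  exact hu

lemma exists_mem_apply_eq_of_injective [FiniteDimensional K V] {T : Module.End K V}
    (hT : Function.Injective T) {p q : Submodule K V} (hpq : ∀ x ∈ p, T x ∈ q)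
    (hqp : ∀ x ∈ q, T x ∈ p) : ∀ y ∈ q, ∃ x ∈ p, T x = y := by
  have hinj_pq : Function.Injective (T.restrict hpq) := fun x x' h =>
    Subtype.ext (hT (congrArg Subtype.val h))
  have hinj_qp : Function.Injective (T.restrict hqp) := fun x x' h =>
    Subtype.ext (hT (congrArg Subtype.val h))
  have hsurj := (LinearMap.injective_iff_surjective_of_finrank_eq_finrank
    (le_antisymm (LinearMap.finrank_le_finrank_of_injective hinj_pq)
      (LinearMap.finrank_le_finrank_of_injective hinj_qp))).mp hinj_pq
  intro y hy
  obtain ⟨x, hx⟩ := hsurj ⟨y, hy⟩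
  exact ⟨x, x.2, congrArg Subtype.val hx⟩

end Grading

section Weil

variable {V : Type*} [AddCommGroup V] [Module ℂ V] [FiniteDimensional ℂ V]

noncomputable def weilElement (X Y : Module.End ℂ V) : Module.End ℂ V :=
  nilExp X * nilExp (-Y) * nilExp X

lemma nilExp_apply_mem {A : Module.End ℂ V} {W : Submodule ℂ V} (hA : ∀ x ∈ W, A x ∈ W) :
    ∀ x ∈ W, nilExp A x ∈ W := fun x hx => by
  rw [nilExp, LinearMap.sum_apply]
  exact W.sum_mem fun k _ => W.smul_mem _ (Module.End.pow_apply_mem_of_forall_mem k hA x hx)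

variable {X Y H : Module.End ℂ V}

lemma isUnit_weilElement (hX : IsNilpotent X) (hY : IsNilpotent Y) : IsUnit (weilElement X Y) :=
  ((isUnit_truncExp hX _).mul (isUnit_truncExp hY.neg _)).mul (isUnit_truncExp hX _)

lemma weilElement_apply_mem_of_invariant {W : Submodule ℂ V} (hX : ∀ x ∈ W, X x ∈ W)
    (hY : ∀ x ∈ W, Y x ∈ W) : ∀ x ∈ W, weilElement X Y x ∈ W := fun x hx =>
  nilExp_apply_mem hX _ <| nilExp_apply_mem (fun y hy => W.neg_mem (hY y hy)) _ <|
    nilExp_apply_mem hX x hx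

lemma weilElement_mul_H (hX : X ^ Module.finrank ℂ V = 0) (hY : Y ^ Module.finrank ℂ V = 0)
    (hXY : ⁅X, Y⁆ = H) (hHX : ⁅H, X⁆ = 2 • X) (hHY : ⁅H, Y⁆ = -(2 • Y)) :
    weilElement X Y * H = -(H * weilElement X Y) :=
  truncExp_weil_mul_eq_neg_mul (pow_eq_zero_of_le (Nat.le_succ _) hX) (pow_eq_zero_of_le (Nat.le_succ _) hY)
    hXY hHX hHY

end Weil

section Lefschetz

variable {K V : Type*} [Field K] [AddCommGroup V] [Module K V]
  {P : ℤ → ℤ → ℤ → Submodule K V} {X Y H : Module.End K V}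

def IsLefschetzDecomposition (P : ℤ → ℤ → ℤ → Submodule K V) (X Y : Module.End K V)
    (k p q : ℤ) (a : V) (m : ℕ) (c : ℕ → V) : Prop :=
  (∀ j : ℕ, c j ∈ P (k - 2 * (j : ℤ)) (p - j) (q - j)) ∧
  (∀ j : ℕ, Y (c j) = 0) ∧
  (∀ j : ℕ, (j : ℤ) < max k 0 → c j = 0) ∧
  a = ∑ j ∈ range m, ((j ! : K))⁻¹ • (X ^ j) (c j)

lemma pow_apply_mem_of_shift (hX : ∀ ℓ p q : ℤ, ∀ x ∈ P ℓ p q, X x ∈ P (ℓ + 2) (p + 1) (q + 1))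
    (j : ℕ) {k p q : ℤ} {x : V} (hx : x ∈ P k p q) :
    (X ^ j) x ∈ P (k + 2 * j) (p + j) (q + j) := by
  induction j with
  | zero => simpa using hx
  | succ j ih =>
    rw [pow_succ', Module.End.mul_apply]
    convert hX _ _ _ _ ih using 2 <;> push_cast <;> ring

lemma H_pow_apply (hHX : ⁅H, X⁆ = 2 • X) {v : V} {μ : K} (hv : H v = μ • v) (n : ℕ) :
    H ((X ^ n) v) = (μ + 2 * n) • (X ^ n) v := by
  induction n with
  | zero => simpa using hv
  | succ n ih =>
    have h := LinearMap.congr_fun hHX ((X ^ n) v)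
    rw [Ring.lie_def, LinearMap.sub_apply, Module.End.mul_apply, Module.End.mul_apply, ih,
      map_smul, LinearMap.smul_apply, sub_eq_iff_eq_add] at h
    rw [pow_succ', Module.End.mul_apply, h, two_nsmul, ← two_smul K, ← add_smul]
    push_cast
    ring_nf

lemma pow_succ_apply_Y (hXY : ⁅X, Y⁆ = H) (hHX : ⁅H, X⁆ = 2 • X) {v : V} {μ : K}
    (hv : H v = μ • v) (n : ℕ) :
    (X ^ (n + 1)) (Y v) = Y ((X ^ (n + 1)) v) + ((n + 1) * (μ + n) : K) • (X ^ n) v := by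
  have hcomm : ∀ w, X (Y w) = Y (X w) + H w := fun w => by
    rw [← hXY, Ring.lie_def, LinearMap.sub_apply, Module.End.mul_apply, Module.End.mul_apply]
    abel
  induction n with
  | zero => simp [hcomm, hv]
  | succ n ih =>
    rw [pow_succ' X (n + 1), Module.End.mul_apply, Module.End.mul_apply, ih, map_add, map_smul,
      hcomm, H_pow_apply hHX hv, ← Module.End.mul_apply X (X ^ n), ← pow_succ', add_assoc,
      ← add_smul]
    push_cast
    ring_nf

lemma eq_zero_of_pow_apply_eq_zero
    (hXiso : ∀ (ℓ : ℕ) (p q : ℤ), ∀ y ∈ P (ℓ : ℤ) p q,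
      ∃! x : V, x ∈ P (-(ℓ : ℤ)) (p - ℓ) (q - ℓ) ∧ (X ^ ℓ) x = y)
    (ℓ : ℕ) {p q : ℤ} {v : V} (hv : v ∈ P (-(ℓ : ℤ)) (p - ℓ) (q - ℓ)) (h : (X ^ ℓ) v = 0) :
    v = 0 :=
  (hXiso ℓ p q 0 (zero_mem _)).unique ⟨hv, h⟩ ⟨zero_mem _, map_zero _⟩

lemma Y_apply_eq_zero_of_pow_apply_eq_zero
    (hY : ∀ ℓ p q : ℤ, ∀ x ∈ P ℓ p q, Y x ∈ P (ℓ - 2) (p - 1) (q - 1))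
    (hXY : ⁅X, Y⁆ = H) (hHX : ⁅H, X⁆ = 2 • X) (hH : ∀ ℓ p q : ℤ, ∀ x ∈ P ℓ p q, H x = (ℓ : K) • x)
    (hXiso : ∀ (ℓ : ℕ) (p q : ℤ), ∀ y ∈ P (ℓ : ℤ) p q,
      ∃! x : V, x ∈ P (-(ℓ : ℤ)) (p - ℓ) (q - ℓ) ∧ (X ^ ℓ) x = y)
    (L : ℕ) {p q : ℤ} {v : V} (hv : v ∈ P (-(L : ℤ)) p q) (h : (X ^ (L + 1)) v = 0) :
    Y v = 0 := by
  have hYv : Y v ∈ P (-((L + 2 : ℕ) : ℤ)) (p + L + 1 - (L + 2 : ℕ)) (q + L + 1 - (L + 2 : ℕ)) := by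
    convert hY _ _ _ _ hv using 2 <;> push_cast <;> ring
  refine eq_zero_of_pow_apply_eq_zero hXiso (L + 2) hYv ?_
  rw [pow_succ_apply_Y hXY hHX (hH _ _ _ _ hv) (L + 1), pow_succ', Module.End.mul_apply, h,
    map_zero, map_zero, smul_zero, add_zero]

lemma exists_Y_sub_X_apply_eq_zero
    (hX : ∀ ℓ p q : ℤ, ∀ x ∈ P ℓ p q, X x ∈ P (ℓ + 2) (p + 1) (q + 1))
    (hY : ∀ ℓ p q : ℤ, ∀ x ∈ P ℓ p q, Y x ∈ P (ℓ - 2) (p - 1) (q - 1))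
    (hXY : ⁅X, Y⁆ = H) (hHX : ⁅H, X⁆ = 2 • X) (hH : ∀ ℓ p q : ℤ, ∀ x ∈ P ℓ p q, H x = (ℓ : K) • x)
    (hXiso : ∀ (ℓ : ℕ) (p q : ℤ), ∀ y ∈ P (ℓ : ℤ) p q,
      ∃! x : V, x ∈ P (-(ℓ : ℤ)) (p - ℓ) (q - ℓ) ∧ (X ^ ℓ) x = y)
    (L : ℕ) {p q : ℤ} {a : V} (ha : a ∈ P (-(L : ℤ)) p q) :
    ∃ b ∈ P (-(L : ℤ) - 2) (p - 1) (q - 1), Y (a - X b) = 0 := by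
  have hXa : (X ^ (L + 1)) a ∈ P ((L + 2 : ℕ) : ℤ) (p + L + 1) (q + L + 1) := by
    convert pow_apply_mem_of_shift hX (L + 1) ha using 2 <;> push_cast <;> ring
  obtain ⟨b, ⟨hb, hXb⟩, -⟩ := hXiso (L + 2) _ _ _ hXa
  have hb' : b ∈ P (-(L : ℤ) - 2) (p - 1) (q - 1) := by
    convert hb using 2 <;> push_cast <;> ring
  have hXb' : X b ∈ P (-(L : ℤ)) p q := by
    convert hX _ _ _ _ hb' using 2 <;> ring
  refine ⟨b, hb', Y_apply_eq_zero_of_pow_apply_eq_zero hY hXY hHX hH hXiso L (sub_mem ha hXb') ?_⟩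
  rw [map_sub, ← Module.End.mul_apply, ← pow_succ, hXb, sub_self]

lemma isLefschetzDecomposition_zero (k p q : ℤ) : IsLefschetzDecomposition P X Y k p q 0 0 0 :=
  ⟨fun _ => zero_mem _, fun _ => map_zero _, fun _ _ => rfl, by simp⟩

variable [CharZero K]

lemma pow_apply_sum_factorial_smul (c : ℕ → V) (s m : ℕ) :
    (X ^ s) (∑ j ∈ range m, ((j ! : K))⁻¹ • (X ^ j) (c j)) =
      ∑ i ∈ range (m + s), ((i ! : K))⁻¹ • (X ^ i) ((i.descFactorial s : K) • c (i - s)) := by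
  rw [add_comm, sum_range_add, map_sum, sum_eq_zero (s := range s) fun i hi => ?_, zero_add]
  · refine sum_congr rfl fun j _ => ?_
    have hfac : ((j ! : K)) * ((s + j).descFactorial s : K) = ((s + j) ! : K) := by
      have := Nat.factorial_mul_descFactorial (Nat.le_add_right s j)
      rw [Nat.add_sub_cancel_left] at this
      exact_mod_cast this
    have hd : ((s + j).descFactorial s : K) ≠ 0 :=
      Nat.cast_ne_zero.mpr (Nat.descFactorial_eq_zero_iff_lt.not.mpr (by omega))
    rw [Nat.add_sub_cancel_left, map_smul, map_smul, pow_add, Module.End.mul_apply, smul_smul,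
      ← hfac, mul_inv, mul_assoc, inv_mul_cancel₀ hd, mul_one]
  · rw [Nat.descFactorial_eq_zero_iff_lt.mpr (mem_range.mp hi), Nat.cast_zero, zero_smul,
      map_zero, smul_zero]

lemma IsLefschetzDecomposition.add_pow_apply {k p q : ℤ} {s m : ℕ} {a a₀ b : V} {c : ℕ → V}
    (hb : IsLefschetzDecomposition P X Y (k - 2 * s) (p - s) (q - s) b m c)
    (ha₀ : a₀ ∈ P k p q) (hYa₀ : Y a₀ = 0) (hka₀ : 0 < k → a₀ = 0) (hs : 0 < s) (hks : k ≤ s)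
    (ha : a = a₀ + (X ^ s) b) :
    IsLefschetzDecomposition P X Y k p q a (m + s)
      (Pi.single 0 a₀ + fun i => (i.descFactorial s : K) • c (i - s)) := by
  obtain ⟨hc, hYc, hc0, rfl⟩ := hb
  refine ⟨fun j => add_mem ?_ ?_, fun j => ?_, fun j hj => ?_, ?_⟩
  · rcases eq_or_ne j 0 with rfl | hj
    · simpa using ha₀
    · simp [hj]
  · rcases le_or_gt s j with hsj | hsj
    · refine Submodule.smul_mem _ _ ?_
      convert hc (j - s) using 2 <;> push_cast [Nat.cast_sub hsj] <;> ring
    · simp [Nat.descFactorial_eq_zero_iff_lt.mpr hsj]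
  · rcases eq_or_ne j 0 with rfl | hj
    · simp [hYa₀, hYc]
    · simp [hj, hYc]
  · have hk : 0 < k := by omega
    simp [hka₀ hk, Nat.descFactorial_eq_zero_iff_lt.mpr (by omega : j < s)]
  · rw [ha, pow_apply_sum_factorial_smul, Pi.add_def]
    simp only [map_add, smul_add, sum_add_distrib]
    congr 1
    rw [sum_eq_single 0 (fun i _ hi => by simp [hi]) (fun h => absurd (mem_range.mpr (by omega)) h)]
    simp

lemma exists_isLefschetzDecomposition
    (hX : ∀ ℓ p q : ℤ, ∀ x ∈ P ℓ p q, X x ∈ P (ℓ + 2) (p + 1) (q + 1))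
    (hY : ∀ ℓ p q : ℤ, ∀ x ∈ P ℓ p q, Y x ∈ P (ℓ - 2) (p - 1) (q - 1))
    (hXY : ⁅X, Y⁆ = H) (hHX : ⁅H, X⁆ = 2 • X) (hH : ∀ ℓ p q : ℤ, ∀ x ∈ P ℓ p q, H x = (ℓ : K) • x)
    (hXiso : ∀ (ℓ : ℕ) (p q : ℤ), ∀ y ∈ P (ℓ : ℤ) p q,
      ∃! x : V, x ∈ P (-(ℓ : ℤ)) (p - ℓ) (q - ℓ) ∧ (X ^ ℓ) x = y)
    {d : ℕ} (hXd : X ^ d = 0) (k p q : ℤ) :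
    ∀ a ∈ P k p q, ∃ (m : ℕ) (c : ℕ → V), IsLefschetzDecomposition P X Y k p q a m c := by
  suffices ∀ n : ℕ, ∀ k p q : ℤ, (k + d).toNat ≤ n →
      ∀ a ∈ P k p q, ∃ (m : ℕ) (c : ℕ → V), IsLefschetzDecomposition P X Y k p q a m c from
    this _ k p q le_rfl
  intro n
  induction n with
  | zero =>
    intro k p q hk a ha
    obtain ⟨L, rfl⟩ : ∃ L : ℕ, k = -(L : ℤ) := ⟨(-k).toNat, by omega⟩
    have hXa : (X ^ (L + 1)) a = 0 := by
      rw [pow_eq_zero_of_le (by omega) hXd, LinearMap.zero_apply]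
    have hYa := Y_apply_eq_zero_of_pow_apply_eq_zero hY hXY hHX hH hXiso L ha hXa
    exact ⟨_, _, (isLefschetzDecomposition_zero _ _ _).add_pow_apply ha hYa (by omega) one_pos
      (by omega) (by simp)⟩
  | succ n ih =>
    intro k p q hk a ha
    rcases le_or_gt k 0 with hk0 | hk0
    · obtain ⟨L, rfl⟩ : ∃ L : ℕ, k = -(L : ℤ) := ⟨(-k).toNat, by omega⟩
      obtain ⟨b, hb, hYab⟩ := exists_Y_sub_X_apply_eq_zero hX hY hXY hHX hH hXiso L ha
      have hXb : X b ∈ P (-(L : ℤ)) p q := by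
        convert hX _ _ _ _ hb using 2 <;> ring
      obtain ⟨m, c, hbc⟩ := ih (-(L : ℤ) - 2 * (1 : ℕ)) (p - (1 : ℕ)) (q - (1 : ℕ)) (by omega) b
        (by simpa using hb)
      exact ⟨_, _, hbc.add_pow_apply (sub_mem ha hXb) hYab (by omega) one_pos (by omega)
        (by simp)⟩
    · obtain ⟨s, rfl⟩ : ∃ s : ℕ, k = s := ⟨k.toNat, by omega⟩
      obtain ⟨b, ⟨hb, rfl⟩, -⟩ := hXiso s p q a ha
      obtain ⟨m, c, hbc⟩ := ih (s - 2 * s) (p - s) (q - s) (by omega) b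
        (by convert hb using 2; ring)
      exact ⟨_, _, hbc.add_pow_apply (zero_mem _) (map_zero _) (fun _ => rfl) (by omega) le_rfl
        (zero_add _).symm⟩

end Lefschetz

section HodgeLefschetz

variable {V : Type*} [AddCommGroup V] [Module ℂ V] [FiniteDimensional ℂ V]
  {P : ℤ → ℤ → ℤ → Submodule ℂ V} {X Y H : Module.End ℂ V}

lemma weilElement_apply_mem
    (hX : ∀ ℓ p q : ℤ, ∀ x ∈ P ℓ p q, X x ∈ P (ℓ + 2) (p + 1) (q + 1))
    (hY : ∀ ℓ p q : ℤ, ∀ x ∈ P ℓ p q, Y x ∈ P (ℓ - 2) (p - 1) (q - 1))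
    (hH : ∀ ℓ p q : ℤ, ∀ x ∈ P ℓ p q, H x = (ℓ : ℂ) • x)
    (hw : weilElement X Y * H = -(H * weilElement X Y)) (k p q : ℤ) :
    ∀ a ∈ P k p q, weilElement X Y a ∈ P (-k) (p - k) (q - k) := by
  intro a ha
  set Q : ℤ × ℤ × ℤ → Submodule ℂ V := fun i => P i.1 i.2.1 i.2.2
  set S : Set (ℤ × ℤ × ℤ) := {i | 2 * i.2.1 - i.1 = 2 * p - k ∧ 2 * i.2.2 - i.1 = 2 * q - k}
  have hXS := apply_mem_biSup_of_mapsTo (Q := Q) (fun i => (i.1 + 2, i.2.1 + 1, i.2.2 + 1))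
    (fun i => hX i.1 i.2.1 i.2.2) (S := S) fun _ ⟨h₁, h₂⟩ => by
      constructor <;> dsimp only at h₁ h₂ ⊢ <;> omega
  have hYS := apply_mem_biSup_of_mapsTo (Q := Q) (fun i => (i.1 - 2, i.2.1 - 1, i.2.2 - 1))
    (fun i => hY i.1 i.2.1 i.2.2) (S := S) fun _ ⟨h₁, h₂⟩ => by
      constructor <;> dsimp only at h₁ h₂ ⊢ <;> omega
  have haS : a ∈ ⨆ i ∈ S, Q i := le_biSup Q (i := (k, p, q)) (by simp [S]) ha
  refine mem_of_mem_biSup_of_apply_eq_smul (Q := Q) (fun i => (i.1 : ℂ))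
    (fun i => hH i.1 i.2.1 i.2.2) (i₀ := (-k, p - k, q - k)) ?_
    (weilElement_apply_mem_of_invariant hXS hYS a haS) ?_
  · rintro ⟨ℓ, p', q'⟩ ⟨h₁, h₂⟩ hℓ
    dsimp only at h₁ h₂ hℓ
    have : ℓ = -k := by exact_mod_cast hℓ
    simp only [Prod.mk.injEq]
    omega
  · rw [← Module.End.mul_apply, ← neg_neg (H * _), ← hw, LinearMap.neg_apply, Module.End.mul_apply,
      hH k p q a ha, map_smul]
    push_cast
    rw [neg_smul]

end HodgeLefschetz

theorem weil_element_hodge_lefschetz_general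
    (V : Type*) [AddCommGroup V] [Module ℂ V] [FiniteDimensional ℂ V]
    (P : ℤ → ℤ → ℤ → Submodule ℂ V)
    (hint : DirectSum.IsInternal (fun x : ℤ × ℤ × ℤ => P x.1 x.2.1 x.2.2))
    (X Y H : Module.End ℂ V)
    (hXY : ⁅X, Y⁆ = H) (hHX : ⁅H, X⁆ = 2 • X) (hHY : ⁅H, Y⁆ = -(2 • Y))
    (hH : ∀ ℓ p q : ℤ, ∀ x ∈ P ℓ p q, H x = (ℓ : ℂ) • x)
    (hX : ∀ ℓ p q : ℤ, ∀ x ∈ P ℓ p q, X x ∈ P (ℓ + 2) (p + 1) (q + 1))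
    (hY : ∀ ℓ p q : ℤ, ∀ x ∈ P ℓ p q, Y x ∈ P (ℓ - 2) (p - 1) (q - 1))
    (hXiso : ∀ (ℓ : ℕ) (p q : ℤ), ∀ y ∈ P (ℓ : ℤ) p q,
      ∃! x : V, x ∈ P (-(ℓ : ℤ)) (p - ℓ) (q - ℓ) ∧ (X ^ ℓ) x = y) :
    (∀ k p q : ℤ, ∀ a ∈ P k p q,
      (nilExp X * nilExp (-Y) * nilExp X) a ∈ P (-k) (p - k) (q - k)) ∧
    Function.Bijective ⇑(nilExp X * nilExp (-Y) * nilExp X) ∧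
    (∀ k p q : ℤ, ∀ b ∈ P (-k) (p - k) (q - k),
      ∃ a ∈ P k p q, (nilExp X * nilExp (-Y) * nilExp X) a = b) ∧
    (∀ k p q : ℤ, ∀ a ∈ P k p q, ∃ (m : ℕ) (c : ℕ → V),
      (∀ j : ℕ, c j ∈ P (k - 2 * (j : ℤ)) (p - j) (q - j)) ∧
      (∀ j : ℕ, Y (c j) = 0) ∧
      (∀ j : ℕ, (j : ℤ) < max k 0 → c j = 0) ∧
      a = ∑ j ∈ Finset.range m, ((j.factorial : ℂ))⁻¹ • (X ^ j) (c j)) := by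
  have hXnil : X ^ Module.finrank ℂ V = 0 := pow_finrank_eq_zero_of_mapsTo_succ hint
    (fun i => (i.1 + 2, i.2.1 + 1, i.2.2 + 1)) (fun i => i.2.1) (fun _ => rfl)
    fun i => hX i.1 i.2.1 i.2.2
  have hYnil : Y ^ Module.finrank ℂ V = 0 := pow_finrank_eq_zero_of_mapsTo_succ hint
    (fun i => (i.1 - 2, i.2.1 - 1, i.2.2 - 1)) (fun i => -i.2.1) (fun _ => by ring)
    fun i => hY i.1 i.2.1 i.2.2
  have hmem := weilElement_apply_mem hX hY hH (weilElement_mul_H hXnil hYnil hXY hHX hHY)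
  have hbij : Function.Bijective (weilElement X Y) :=
    (Module.End.isUnit_iff _).mp (isUnit_weilElement ⟨_, hXnil⟩ ⟨_, hYnil⟩)
  refine ⟨hmem, hbij, fun k p q => exists_mem_apply_eq_of_injective hbij.1 (hmem k p q)
    fun b hb => ?_, exists_isLefschetzDecomposition hX hY hXY hHX hH hXiso hXnil⟩
  simpa using hmem (-k) (p - k) (q - k) b hb

/-- Let `V = ⊕_ℓ V_ℓ` be a Hodge–Lefschetz structure of central weight `n`, with
Hodge pieces `P ℓ p q ⊆ V_ℓ` (supported on `p + q = n + ℓ`), `sl₂`-action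
`(X, Y, H)` with `X`, `Y` of Hodge types `(1,1)` and `(−1,−1)` and
`X^ℓ : V_{-ℓ} → V_ℓ(ℓ)`, `Y^ℓ : V_ℓ → V_{-ℓ}(−ℓ)` isomorphisms of Hodge
structures.  Then the Weil element `w = e^X e^{-Y} e^X` maps `V_k` isomorphically
onto `V_{-k}` as a morphism of Hodge structures `V_k → V_{-k}(−k)`; moreover the
Lefschetz decomposition of any `a ∈ V_k^{p,q}` has components
`a_j ∈ V_{k-2j}^{p-j,q-j}`. -/
theorem weil_element_hodge_lefschetz
    (V : Type*) [AddCommGroup V] [Module ℂ V] [FiniteDimensional ℂ V]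
    (n : ℤ) (P : ℤ → ℤ → ℤ → Submodule ℂ V)
    (hsupp : ∀ ℓ p q : ℤ, p + q ≠ n + ℓ → P ℓ p q = ⊥)
    (hint : DirectSum.IsInternal (fun x : ℤ × ℤ × ℤ => P x.1 x.2.1 x.2.2))
    (X Y H : Module.End ℂ V)
    (hXY : ⁅X, Y⁆ = H) (hHX : ⁅H, X⁆ = 2 • X) (hHY : ⁅H, Y⁆ = -(2 • Y))
    (hH : ∀ ℓ p q : ℤ, ∀ x ∈ P ℓ p q, H x = (ℓ : ℂ) • x)
    (hX : ∀ ℓ p q : ℤ, ∀ x ∈ P ℓ p q, X x ∈ P (ℓ + 2) (p + 1) (q + 1))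
    (hY : ∀ ℓ p q : ℤ, ∀ x ∈ P ℓ p q, Y x ∈ P (ℓ - 2) (p - 1) (q - 1))
    (hXiso : ∀ (ℓ : ℕ) (p q : ℤ), ∀ y ∈ P (ℓ : ℤ) p q,
      ∃! x : V, x ∈ P (-(ℓ : ℤ)) (p - ℓ) (q - ℓ) ∧ (X ^ ℓ) x = y)
    (hYiso : ∀ (ℓ : ℕ) (p q : ℤ), ∀ y ∈ P (-(ℓ : ℤ)) p q,
      ∃! x : V, x ∈ P (ℓ : ℤ) (p + ℓ) (q + ℓ) ∧ (Y ^ ℓ) x = y) :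
    (∀ k p q : ℤ, ∀ a ∈ P k p q,
      (nilExp X * nilExp (-Y) * nilExp X) a ∈ P (-k) (p - k) (q - k)) ∧
    Function.Bijective ⇑(nilExp X * nilExp (-Y) * nilExp X) ∧
    (∀ k p q : ℤ, ∀ b ∈ P (-k) (p - k) (q - k),
      ∃ a ∈ P k p q, (nilExp X * nilExp (-Y) * nilExp X) a = b) ∧
    (∀ k p q : ℤ, ∀ a ∈ P k p q, ∃ (m : ℕ) (c : ℕ → V),
      (∀ j : ℕ, c j ∈ P (k - 2 * (j : ℤ)) (p - j) (q - j)) ∧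
      (∀ j : ℕ, Y (c j) = 0) ∧
      (∀ j : ℕ, (j : ℤ) < max k 0 → c j = 0) ∧
      a = ∑ j ∈ Finset.range m, ((j.factorial : ℂ))⁻¹ • (X ^ j) (c j)) :=
  weil_element_hodge_lefschetz_general V P hint X Y H hXY hHX hHY hH hX hY hXiso
end

section
/- Let V be a finite-dimensional complex vector space, N a nilpotent endomorphism with monodromy filtration W_•, and suppose additionally every power of N is strict with respect to a filtration F_• (i.e. N^a(F_b) = F_{a+b} ∩ N^a(V)). Then the two natural filtrations on the primitive part P_r = ker(N^{r+1} : gr^W_r → gr^W_{-r-2}) coincide: the filtration induced from F_• gr^W_r via the inclusion P_r ⊆ gr^W_r equals the filtration given by the image of F_ℓ ∩ ker(N^{r+1}) under the quotient map ker N^{r+1} → ker N^{r+1}/(ker N^r + N·ker N^{r+2}) ≅ P_r. -/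
namespace IsMonodromyFiltration

variable {V : Type*} [AddCommGroup V] [Module ℂ V] {N : V →ₗ[ℂ] V} {W : ℤ → Submodule ℂ V}
  (hW : IsMonodromyFiltration N W)
include hW

theorem pow_apply_mem {ℓ : ℤ} {x : V} (hx : x ∈ W ℓ) (k : ℕ) :
    (N ^ k) x ∈ W (ℓ - 2 * k) := by
  induction k with
  | zero => simpa using hx
  | succ k ih =>
    rw [pow_succ', Module.End.mul_apply]
    convert hW.2.2.2.1 _ ⟨_, ih, rfl⟩ using 2
    push_cast; ring

theorem mem_pred_of_pow_apply_eq_zero {k : ℕ} {x : V} (hx : x ∈ W k) (h : (N ^ k) x = 0) :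
    x ∈ W (k - 1) :=
  (hW.2.2.2.2 k).1 x hx (h ▸ zero_mem _)

theorem ker_pow_succ_le (m : ℕ) : LinearMap.ker (N ^ (m + 1)) ≤ W m := by
  intro y hy
  obtain ⟨b, hb⟩ := hW.2.2.1
  suffices ∀ j : ℕ, y ∈ W (m + j) → y ∈ W m from
    this (b - m).toNat (hW.1 (by omega) (hb ▸ Submodule.mem_top))
  intro j
  induction j with
  | zero => simp
  | succ j ih =>
    intro hj
    have hker : (N ^ (m + j + 1)) y = 0 := by
      rw [show m + j + 1 = j + (m + 1) by omega, pow_add, Module.End.mul_apply,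
        LinearMap.mem_ker.mp hy, map_zero]
    have hj' : y ∈ W ((m + j + 1 : ℕ) : ℤ) := by
      convert hj using 2
      push_cast; ring
    apply ih
    convert hW.mem_pred_of_pow_apply_eq_zero hj' hker using 2
    push_cast; ring

theorem le_map_pow_s19 (m : ℕ) : W (-m) ≤ (W m).map (N ^ m) := by
  obtain ⟨a, ha⟩ := hW.2.1
  suffices ∀ k m : ℕ, -a ≤ m + k → W (-m) ≤ (W m).map (N ^ m) from this (-a).toNat m (by omega)
  intro k
  induction k with
  | zero =>
    intro m hm w hw
    have hw0 : w ∈ W a := hW.1 (by omega) hw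
    rw [ha, Submodule.mem_bot] at hw0
    exact hw0 ▸ zero_mem _
  | succ k ih =>
    intro m hm w hw
    obtain ⟨u, hu, hdiff⟩ := (hW.2.2.2.2 m).2 w hw
    -- the error `w - N^m u` lies one step lower, where the induction hypothesis applies
    have hlow : w - (N ^ m) u ∈ W (-((m + 1 : ℕ) : ℤ)) := by
      rw [← neg_sub]
      convert neg_mem hdiff using 2
      push_cast; ring
    obtain ⟨u', hu', hu'w⟩ := ih (m + 1) (by omega) hlow
    refine ⟨u + N u', add_mem hu (hW.1 (by omega) (hW.2.2.2.1 _ ⟨u', hu', rfl⟩)), ?_⟩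
    rw [map_add, ← Module.End.mul_apply, ← pow_succ, hu'w, add_sub_cancel]

theorem mem_of_pow_apply_mem {m : ℕ} {z : V} (hz : (N ^ m) z ∈ W (-m)) : z ∈ W m := by
  obtain ⟨u, hu, huz⟩ := hW.le_map_pow_s19 m hz
  have hker : z - u ∈ LinearMap.ker (N ^ (m + 1)) := by
    rw [LinearMap.mem_ker, pow_succ', Module.End.mul_apply, map_sub, huz, sub_self, map_zero]
  simpa using add_mem (hW.ker_pow_succ_le m hker) hu

end IsMonodromyFiltration

theorem primitive_part_filtrations_coincide_general
    (V : Type*) [AddCommGroup V] [Module ℂ V]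
    (N : V →ₗ[ℂ] V)
    (F : ℤ → Submodule ℂ V)
    (hstrict : ∀ (a : ℕ) (b : ℤ),
      (F b).map (N ^ a) = F ((a : ℤ) + b) ⊓ LinearMap.range (N ^ a))
    (W : ℤ → Submodule ℂ V) (hW : IsMonodromyFiltration N W)
    (r : ℕ) (ℓ : ℤ) :
    (∀ y : V, (N ^ (r + 1)) y = 0 → y ∈ W (r : ℤ)) ∧
    (∀ x ∈ F ℓ ⊓ W (r : ℤ), (N ^ (r + 1)) x ∈ W (-(r : ℤ) - 3) →
      ∃ y : V, y ∈ F ℓ ∧ (N ^ (r + 1)) y = 0 ∧ x - y ∈ W ((r : ℤ) - 1)) := by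
  refine ⟨fun y hy => hW.ker_pow_succ_le r hy, fun x hx hNx => ?_⟩
  have hwW : (N ^ (r + 1)) x ∈ W (-((r + 3 : ℕ) : ℤ)) := by
    convert hNx using 2; push_cast; ring
  have hwF : (N ^ (r + 1)) x ∈ F ((r + 3 : ℕ) + (ℓ - 2)) := by
    rw [show ((r + 3 : ℕ) : ℤ) + (ℓ - 2) = (r + 1 : ℕ) + ℓ by push_cast; ring]
    exact ((hstrict (r + 1) ℓ).le ⟨x, hx.1, rfl⟩).1
  obtain ⟨z, hzF, hz⟩ : (N ^ (r + 1)) x ∈ (F (ℓ - 2)).map (N ^ (r + 3)) := by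
    rw [hstrict]
    exact ⟨hwF, LinearMap.map_le_range (hW.le_map_pow_s19 _ hwW)⟩
  have hzW : z ∈ W (r + 3 : ℕ) := hW.mem_of_pow_apply_mem (hz ▸ hwW)
  have hN2zF : (N ^ 2) z ∈ F ℓ := by
    simpa using ((hstrict 2 (ℓ - 2)).le ⟨z, hzF, rfl⟩).1
  refine ⟨x - (N ^ 2) z, sub_mem hx.1 hN2zF, ?_, ?_⟩
  · rw [map_sub, ← Module.End.mul_apply, ← pow_add, hz, sub_self]
  · rw [sub_sub_cancel]
    convert hW.pow_apply_mem hzW 2 using 2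
    push_cast; ring

/-- Assume every power of the nilpotent endomorphism `N` is strict with respect to
the filtration `F`.  Then the two natural filtrations on the primitive part
`P_r = ker (N^{r+1} : gr^W_r → gr^W_{-r-2})` coincide: the filtration induced from
`F_• gr^W_r` via the inclusion `P_r ⊆ gr^W_r` equals the filtration given by the
image of `F_ℓ ∩ ker N^{r+1}`.  Concretely: `ker N^{r+1} ⊆ W_r` (so that classes of
elements of `F ℓ ∩ ker N^{r+1}` land in `F_ℓ gr^W_r ∩ P_r`), and conversely every
`x ∈ F ℓ ∩ W r` whose class in `gr^W_r` is primitive agrees modulo `W (r-1)` with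
some `y ∈ F ℓ ∩ ker N^{r+1}`. -/
theorem primitive_part_filtrations_coincide
    (V : Type*) [AddCommGroup V] [Module ℂ V] [FiniteDimensional ℂ V]
    (N : V →ₗ[ℂ] V) (hN : IsNilpotent N)
    (F : ℤ → Submodule ℂ V) (hFmono : Monotone F) (hFexh : (⨆ b : ℤ, F b) = ⊤)
    (hNF : ∀ b : ℤ, (F b).map N ≤ F (b + 1))
    (hstrict : ∀ (a : ℕ) (b : ℤ),
      (F b).map (N ^ a) = F ((a : ℤ) + b) ⊓ LinearMap.range (N ^ a))
    (W : ℤ → Submodule ℂ V) (hW : IsMonodromyFiltration N W)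
    (r : ℕ) (ℓ : ℤ) :
    (∀ y : V, (N ^ (r + 1)) y = 0 → y ∈ W (r : ℤ)) ∧
    (∀ x ∈ F ℓ ⊓ W (r : ℤ), (N ^ (r + 1)) x ∈ W (-(r : ℤ) - 3) →
      ∃ y : V, y ∈ F ℓ ∧ (N ^ (r + 1)) y = 0 ∧ x - y ∈ W ((r : ℤ) - 1)) :=
  primitive_part_filtrations_coincide_general V N F hstrict W hW r ℓ
end
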